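/- arXiv:0901.0203 — 12 statements merged into one kernel-verified Lean document; each statement's English description precedes it below -/
import Mathlib

section
/- The subgroup G of GL(6,ℤ) generated by the matrices M_X, M_Y, M_Z is a finite group of order exactly 96. (This is the order of the duality group DF₃ of triple vector bundles, which acts faithfully by these matrices.) -/
open Matrix

/-- The matrix of the dualization functor `X` acting on `(γ,β,α,λ,μ,ν)`. -/
def MXmat : Matrix (Fin 6) (Fin 6) ℤ :=
  !![0,0,0,0,-1,0; 0,0,0,0,0,-1; 0,0,1,0,0,0; 0,0,0,-1,0,0; -1,0,0,0,0,0; 0,-1,0,0,0,0]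

/-- The matrix of the dualization functor `Y`. -/
def MYmat : Matrix (Fin 6) (Fin 6) ℤ :=
  !![0,0,0,-1,0,0; 0,1,0,0,0,0; 0,0,0,0,0,-1; -1,0,0,0,0,0; 0,0,0,0,-1,0; 0,0,-1,0,0,0]

/-- The matrix of the dualization functor `Z`. -/
def MZmat : Matrix (Fin 6) (Fin 6) ℤ :=
  !![1,0,0,0,0,0; 0,0,0,-1,0,0; 0,0,0,0,-1,0; 0,-1,0,0,0,0; 0,0,-1,0,0,0; 0,0,0,0,0,-1]

/-- `M_X` as an element of `GL(6,ℤ)` (it is an involution, so it is its own inverse). -/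
def MX : GL (Fin 6) ℤ := ⟨MXmat, MXmat, by decide, by decide⟩

/-- `M_Y` as an element of `GL(6,ℤ)`. -/
def MY : GL (Fin 6) ℤ := ⟨MYmat, MYmat, by decide, by decide⟩

/-- `M_Z` as an element of `GL(6,ℤ)`. -/
def MZ : GL (Fin 6) ℤ := ⟨MZmat, MZmat, by decide, by decide⟩

/-- The subgroup of `GL(6,ℤ)` generated by `M_X`, `M_Y`, `M_Z`: a faithful model of the
duality group `DF₃` of triple vector bundles. -/
def G : Subgroup (GL (Fin 6) ℤ) := Subgroup.closure {MX, MY, MZ}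

lemma hMX : MX ∈ G := Subgroup.subset_closure (by simp)
lemma hMY : MY ∈ G := Subgroup.subset_closure (by simp)
lemma hMZ : MZ ∈ G := Subgroup.subset_closure (by simp)

def g₁ : GL (Fin 6) ℤ := (MX * MY * MX * MZ) ^ 2
def g₂ : GL (Fin 6) ℤ := (MY * MZ * MY * MX) ^ 2
def g₃ : GL (Fin 6) ℤ := (MZ * MX * MZ * MY) ^ 2

lemma hg₁ : g₁ ∈ G :=
  G.pow_mem (G.mul_mem (G.mul_mem (G.mul_mem hMX hMY) hMX) hMZ) 2
lemma hg₂ : g₂ ∈ G :=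
  G.pow_mem (G.mul_mem (G.mul_mem (G.mul_mem hMY hMZ) hMY) hMX) 2
lemma hg₃ : g₃ ∈ G :=
  G.pow_mem (G.mul_mem (G.mul_mem (G.mul_mem hMZ hMX) hMZ) hMY) 2

/-!
Every generator is a signed permutation matrix, so `G` is the image, under the faithful
representation `(ℤˣ)⁶ ⋊ S₆ → GL(6, ℤ)` by monomial matrices, of the subgroup generated by three
signed permutations. In any group, the `n`-th power of a finite set `S ∋ 1` with `Sⁿ * S ⊆ Sⁿ`
is the subgroup generated by `S`. For `S` the identity together with the three signed
permutations this holds at `n = 8`, and `S⁸` has 96 elements: a finite computation.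
-/

open Equiv
open scoped Pointwise

namespace Finset

variable {α : Type*} [Group α] [DecidableEq α] {X : Finset α} {n : ℕ}

theorem coe_pow_eq_closure_of_pow_mul_subset (hX₁ : 1 ∈ X) (h : X ^ n * X ⊆ X ^ n) :
    ((X ^ n : Finset α) : Set α) = Subgroup.closure (X : Set α) := by
  obtain rfl | hX := eq_singleton_or_nontrivial hX₁
  · simp [Subgroup.closure_singleton_one]
  by_contra hne
  have hlt := pow_ssubset_pow_succ_of_pow_ne_closure hX₁ hX (by simpa using hne)
  rw [pow_succ] at hlt
  exact hlt.not_subset h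

end Finset

namespace Matrix.GeneralLinearGroup

variable (ι R : Type*) [Fintype ι] [DecidableEq ι] [CommRing R]

def diagonalHom : (ι → Rˣ) →* GL ι R :=
  (Units.map (diagonalRingHom ι R).toMonoidHom).comp MulEquiv.piUnits.symm.toMonoidHom

def permHom : Perm ι →* GL ι R := (permMatrixHom (n := ι) (R := R)).toHomUnits

variable {ι R}

@[simp] lemma coe_diagonalHom (u : ι → Rˣ) :
    (diagonalHom ι R u : Matrix ι ι R) = diagonal fun i ↦ (u i : R) := rfl

lemma permHom_apply (σ : Perm ι) (i j : ι) :
    (permHom ι R σ : Matrix ι ι R) i j = if σ j = i then 1 else 0 := by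
  simp [permHom, PEquiv.toMatrix_apply, Equiv.toPEquiv_apply, ← σ.eq_symm_apply, eq_comm]

end Matrix.GeneralLinearGroup

open Matrix.GeneralLinearGroup

attribute [local instance] arrowAction arrowMulDistribMulAction

lemma diagonalHom_smul_mul_permHom {ι R : Type*} [Fintype ι] [DecidableEq ι] [CommRing R]
    (σ : Perm ι) (u : ι → Rˣ) :
    diagonalHom ι R (σ • u) * permHom ι R σ = permHom ι R σ * diagonalHom ι R u := by
  ext i j
  simp only [Units.val_mul, coe_diagonalHom, diagonal_mul, mul_diagonal, permHom_apply]
  split_ifs with h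
  · subst h
    rw [mul_one, one_mul]
    show ((u (σ⁻¹ • σ j) : Rˣ) : R) = u j
    simp
  · simp

/-- The group of monomial matrices: `⟨u, σ⟩` stands for `diagonal u * P σ`, where the
permutation matrix `P σ` sends the basis vector `e j` to `e (σ j)`. -/
abbrev MonomialGroup (ι R : Type*) [Monoid R] :=
  (ι → Rˣ) ⋊[MulDistribMulAction.toMulAut (Perm ι) (ι → Rˣ)] Perm ι

namespace MonomialGroup

variable {ι R : Type*} [Fintype ι] [DecidableEq ι] [CommRing R]

/-- The derived `DecidableEq` of a semidirect product casts along a proof of `x.left = y.left`,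
which the kernel cannot reduce when `x.left` and `y.left` are functions. -/
instance [DecidableEq R] : DecidableEq (MonomialGroup ι R) := fun x y ↦
  decidable_of_iff (x.left = y.left ∧ x.right = y.right) SemidirectProduct.ext_iff.symm

def toGL : MonomialGroup ι R →* GL ι R :=
  SemidirectProduct.lift (diagonalHom ι R) (permHom ι R) fun σ ↦ by
    ext u : 1
    simp [MulAut.conj_apply, eq_mul_inv_iff_mul_eq, diagonalHom_smul_mul_permHom]

lemma coe_toGL (x : MonomialGroup ι R) :
    (toGL x : Matrix ι ι R) = of fun i j ↦ if x.right j = i then (x.left i : R) else 0 := by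
  ext i j
  simp [toGL, SemidirectProduct.lift, diagonal_mul, permHom_apply]

lemma toGL_injective [Nontrivial R] : Function.Injective (toGL (ι := ι) (R := R)) := by
  refine (injective_iff_map_eq_one _).2 fun x hx ↦ ?_
  have entry (i j : ι) :
      (if x.right j = i then (x.left i : R) else 0) = if i = j then 1 else 0 := by
    simpa [coe_toGL, one_apply] using congrArg (fun g : GL ι R ↦ (g : Matrix ι ι R) i j) hx
  have hright : x.right = 1 := by
    ext j
    rw [Perm.one_apply]
    by_contra hne
    simpa [hne] using entry (x.right j) j
  have hleft : x.left = 1 := by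
    ext i
    simpa [hright] using entry i i
  exact SemidirectProduct.ext hleft hright

end MonomialGroup

def signedX : MonomialGroup (Fin 6) ℤ := ⟨![-1, -1, 1, -1, -1, -1], swap 0 4 * swap 1 5⟩
def signedY : MonomialGroup (Fin 6) ℤ := ⟨![-1, 1, -1, -1, -1, -1], swap 0 3 * swap 2 5⟩
def signedZ : MonomialGroup (Fin 6) ℤ := ⟨![1, -1, -1, -1, -1, -1], swap 1 3 * swap 2 4⟩

lemma toGL_signedX : MonomialGroup.toGL signedX = MX :=
  Units.ext <| by rw [MonomialGroup.coe_toGL]; decide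

lemma toGL_signedY : MonomialGroup.toGL signedY = MY :=
  Units.ext <| by rw [MonomialGroup.coe_toGL]; decide

lemma toGL_signedZ : MonomialGroup.toGL signedZ = MZ :=
  Units.ext <| by rw [MonomialGroup.coe_toGL]; decide

def signedGens : Finset (MonomialGroup (Fin 6) ℤ) := {1, signedX, signedY, signedZ}

lemma signedGens_pow_eight_mul_subset_and_card :
    signedGens ^ 8 * signedGens ⊆ signedGens ^ 8 ∧ (signedGens ^ 8).card = 96 := by
  decide +kernel

lemma card_closure_signedGens :
    Nat.card (Subgroup.closure (signedGens : Set (MonomialGroup (Fin 6) ℤ))) = 96 := by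
  obtain ⟨hclosed, hcard⟩ := signedGens_pow_eight_mul_subset_and_card
  rw [← SetLike.coe_sort_coe,
    ← Finset.coe_pow_eq_closure_of_pow_mul_subset (by decide) hclosed,
    Nat.card_coe_set_eq, Set.ncard_coe_finset, hcard]

lemma G_eq_map_closure_signedGens :
    G = (Subgroup.closure (signedGens : Set _)).map MonomialGroup.toGL := by
  rw [MonoidHom.map_closure, signedGens]
  simp [G, Set.image_insert_eq, toGL_signedX, toGL_signedY, toGL_signedZ,
    Subgroup.closure_insert_one]

/-- The duality group `DF₃` of triple vector bundles, modelled faithfully as the subgroup `G`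
of `GL(6,ℤ)` generated by `M_X, M_Y, M_Z`, is a finite group of order exactly 96. -/
theorem stmt_0 : Finite G ∧ Nat.card G = 96 := by
  have hcard : Nat.card G = 96 := by
    rw [G_eq_map_closure_signedGens,
      Subgroup.card_map_of_injective MonomialGroup.toGL_injective, card_closure_signedGens]
  exact ⟨Nat.finite_of_card_ne_zero (by rw [hcard]; norm_num), hcard⟩
end

section
/- The matrices M_X, M_Y, M_Z satisfy the Coxeter-type relations M_X² = M_Y² = M_Z² = 1 and (M_X M_Y)³ = (M_Y M_Z)³ = (M_Z M_X)³ = 1 in GL(6,ℤ). (These encode that the words X², Y², Z², (XY)³, (YZ)³, (ZX)³ are trivial in the duality group DF₃.) -/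
open Matrix

theorem MXmat_sq : MXmat ^ 2 = 1 := by decide
theorem MYmat_sq : MYmat ^ 2 = 1 := by decide
theorem MZmat_sq : MZmat ^ 2 = 1 := by decide

theorem MXmat_mul_MYmat_pow_three : (MXmat * MYmat) ^ 3 = 1 := by decide
theorem MYmat_mul_MZmat_pow_three : (MYmat * MZmat) ^ 3 = 1 := by decide
theorem MZmat_mul_MXmat_pow_three : (MZmat * MXmat) ^ 3 = 1 := by decide

/-- The generators satisfy the Coxeter-type relations `M_X² = M_Y² = M_Z² = 1` and
`(M_X M_Y)³ = (M_Y M_Z)³ = (M_Z M_X)³ = 1` in `GL(6,ℤ)`. -/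
theorem stmt_1 :
    MX ^ 2 = 1 ∧ MY ^ 2 = 1 ∧ MZ ^ 2 = 1 ∧
    (MX * MY) ^ 3 = 1 ∧ (MY * MZ) ^ 3 = 1 ∧ (MZ * MX) ^ 3 = 1 :=
  ⟨Units.ext MXmat_sq, Units.ext MYmat_sq, Units.ext MZmat_sq,
    Units.ext MXmat_mul_MYmat_pow_three, Units.ext MYmat_mul_MZmat_pow_three,
    Units.ext MZmat_mul_MXmat_pow_three⟩
end

section
/- The subgroup of GL(6,ℤ) generated by M_X and M_Y has order 6 and is isomorphic to the symmetric group on 3 letters. (This realizes the duality group DF₂ ≅ S₃ of double vector bundles as a subgroup of the triple duality group.) -/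
open Matrix

/-! `M_X` and `M_Y` are signed permutation matrices permuting the coordinate lines of
`(μ, γ, λ)` and of `(β, ν, α)` alike, each triple as the letters `0, 1, 2`. Reading off the
signs, they are the images of the transpositions `(0 1)` and `(1 2)` under the representation
of `S₃` which is the sign-twisted permutation representation on `(μ, γ, λ)` plus the
permutation representation, conjugated by the sign change of `β` and `α`, on `(β, ν, α)`.
This representation is faithful and `S₃` is generated by `(0 1)` and `(1 2)`, so
`⟨M_X, M_Y⟩` is its image, a copy of `S₃`. -/

open Equiv Equiv.Perm

theorem Equiv.Perm.closure_swap_zero_one_swap_one_two :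
    Subgroup.closure {swap (0 : Fin 3) 1, swap 1 2} = ⊤ := by
  apply Subgroup.closure_eq_top_of_mclosure_eq_top
  convert mclosure_swap_castSucc_succ 2
  ext σ
  simp [Fin.exists_fin_two, eq_comm]

theorem MonoidHom.range_eq_closure_image {H K : Type*} [Group H] [Group K] (f : H →* K)
    {s : Set H} (hs : Subgroup.closure s = ⊤) : f.range = Subgroup.closure (f '' s) := by
  rw [f.range_eq_map, ← hs, f.map_closure]

noncomputable def MonoidHom.closureImageEquivOfInjective {H K : Type*} [Group H] [Group K]
    (f : H →* K) (hf : Function.Injective f) {s : Set H} (hs : Subgroup.closure s = ⊤) :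
    Subgroup.closure (f '' s) ≃* H :=
  (MulEquiv.subgroupCongr (f.range_eq_closure_image hs).symm).trans
    (MonoidHom.ofInjective hf).symm

-- Coordinate indices: `0 = γ, 1 = β, 2 = α, 3 = λ, 4 = μ, 5 = ν`.
def dualityLetter : Fin 6 → Fin 3 := ![1, 0, 2, 2, 0, 1]

def signTwistedCoords : Finset (Fin 6) := {0, 3, 4}

def dualitySignChange : Fin 6 → ℤ := ![1, -1, -1, 1, 1, 1]

def dualityMatrix (σ : Perm (Fin 3)) : Matrix (Fin 6) (Fin 6) ℤ :=
  Matrix.of fun i j =>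
    if (i ∈ signTwistedCoords ↔ j ∈ signTwistedCoords) ∧ σ (dualityLetter j) = dualityLetter i
    then dualitySignChange i * dualitySignChange j *
      (if i ∈ signTwistedCoords then (sign σ : ℤ) else 1)
    else 0

def dualityRep : Perm (Fin 3) →* GL (Fin 6) ℤ :=
  MonoidHom.toHomUnits
    { toFun := dualityMatrix
      map_one' := by decide
      map_mul' := by decide }

theorem dualityRep_swap_zero_one : dualityRep (swap 0 1) = MX := Units.ext (by decide)

theorem dualityRep_swap_one_two : dualityRep (swap 1 2) = MY := Units.ext (by decide)

theorem dualityRep_injective : Function.Injective dualityRep := fun σ τ h =>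
  (by decide : ∀ σ τ : Perm (Fin 3), dualityMatrix σ = dualityMatrix τ → σ = τ)
    σ τ (congrArg Units.val h)

/-- The subgroup of `GL(6,ℤ)` generated by `M_X` and `M_Y` has order 6 and is isomorphic to
the symmetric group on three letters. -/
theorem stmt_2 :
    Nat.card (Subgroup.closure {MX, MY} : Subgroup (GL (Fin 6) ℤ)) = 6 ∧
    Nonempty ((Subgroup.closure {MX, MY} : Subgroup (GL (Fin 6) ℤ)) ≃* Equiv.Perm (Fin 3)) := by
  have hgen : dualityRep '' {swap 0 1, swap 1 2} = {MX, MY} := by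
    rw [Set.image_pair, dualityRep_swap_zero_one, dualityRep_swap_one_two]
  rw [← hgen]
  let e := dualityRep.closureImageEquivOfInjective dualityRep_injective
    closure_swap_zero_one_swap_one_two
  refine ⟨?_, ⟨e⟩⟩
  rw [Nat.card_congr e.toEquiv, Nat.card_perm, Nat.card_eq_fintype_card, Fintype.card_fin]
  rfl
end

section
/- The elements g₁ = (M_X M_Y M_X M_Z)², g₂ = (M_Y M_Z M_Y M_X)², g₃ = (M_Z M_X M_Z M_Y)² of G each have order 2, commute pairwise, and satisfy g₂ · g₁ = g₃; consequently {1, g₁, g₂, g₃} is a subgroup of G isomorphic to the Klein four-group ℤ/2 × ℤ/2. (This is the paper's Proposition that the words (XYXZ)², (YZYX)², (ZXZY)² have order 2 in DF₃ and (YZYX)²(XYXZ)² = (ZXZY)².) -/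
/-!
The only computation is on the 6 × 6 integer matrices: `g₁`, `g₂`, `g₃` square to `1`,
`g₂ g₁ = g₃`, and `1`, `g₁`, `g₂` are pairwise distinct. The rest is group theory: two
involutions whose product is an involution commute, and two distinct, commuting, nontrivial
involutions `a`, `b` generate the subgroup `{1, a, b, b a}`, which has order 4 and exponent 2,
i.e. is a Klein four-group.
-/

open Matrix

section KleinFour

variable {M : Type*} [Group M] {a b : M}

theorem commute_of_sq_eq_one (ha : a ^ 2 = 1) (hb : b ^ 2 = 1) (hba : (b * a) ^ 2 = 1) :
    Commute a b := by
  rw [sq, mul_eq_one_iff_eq_inv, _root_.mul_inv_rev, inv_eq_of_mul_eq_one_right (sq a ▸ ha),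
    inv_eq_of_mul_eq_one_right (sq b ▸ hb)] at hba
  exact hba.symm

theorem mul_ne_one_of_sq_eq_one (ha : a ^ 2 = 1) (hab : a ≠ b) : b * a ≠ 1 := by
  rw [Ne, mul_eq_one_iff_eq_inv, inv_eq_of_mul_eq_one_right (sq a ▸ ha)]
  exact hab.symm

namespace Subgroup

def kleinFour (ha : a ^ 2 = 1) (hb : b ^ 2 = 1) (hab : Commute a b) : Subgroup M where
  carrier := {1, a, b, b * a}
  one_mem' := Set.mem_insert 1 _
  inv_mem' := by
    have ha' := inv_eq_of_mul_eq_one_right (sq a ▸ ha)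
    have hb' := inv_eq_of_mul_eq_one_right (sq b ▸ hb)
    rintro x (rfl | rfl | rfl | rfl) <;> simp [ha', hb', hab.eq]
  mul_mem' := by
    have ha₁ : a * a = 1 := sq a ▸ ha
    have hb₁ : b * b = 1 := sq b ▸ hb
    have ha₂ (x : M) : a * (a * x) = x := by rw [← mul_assoc, ha₁, one_mul]
    intro x y hx hy
    rcases hx with hx | hx | hx | hx <;> rcases hy with hy | hy | hy | hy <;> rw [hx, hy] <;>
      simp [mul_assoc, ha₁, hb₁, ha₂, ← hab.eq, hab.symm.left_comm]

theorem coe_kleinFour (ha : a ^ 2 = 1) (hb : b ^ 2 = 1) (hab : Commute a b) :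
    (kleinFour ha hb hab : Set M) = {1, a, b, b * a} :=
  rfl

theorem sq_eq_one_of_mem_kleinFour {ha : a ^ 2 = 1} {hb : b ^ 2 = 1} {hab : Commute a b} {x : M}
    (hx : x ∈ kleinFour ha hb hab) : x ^ 2 = 1 := by
  rcases hx with hx | hx | hx | hx <;> rw [hx]
  · exact one_pow 2
  · exact ha
  · exact hb
  · rw [hab.symm.mul_pow, ha, hb, one_mul]

theorem closure_eq_kleinFour (ha : a ^ 2 = 1) (hb : b ^ 2 = 1) (hab : Commute a b) :
    closure {a, b, b * a} = kleinFour ha hb hab := by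
  refine le_antisymm ((closure_le _).2 fun x hx => Or.inr hx) ?_
  rintro x (hx | hx | hx | hx) <;> rw [hx]
  · exact one_mem _
  all_goals exact subset_closure (by simp)

theorem isKleinFour_kleinFour (ha : a ^ 2 = 1) (hb : b ^ 2 = 1) (hab : Commute a b)
    (ha₁ : a ≠ 1) (hb₁ : b ≠ 1) (hne : a ≠ b) : IsKleinFour (kleinFour ha hb hab) where
  card_four := by
    rw [← SetLike.coe_sort_coe, Nat.card_coe_set_eq, Set.ncard_eq_four]
    refine ⟨1, a, b, b * a, ha₁.symm, hb₁.symm, (mul_ne_one_of_sq_eq_one ha hne).symm, hne,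
      fun h => hb₁ (mul_eq_right.1 h.symm), fun h => ha₁ (mul_eq_left.1 h.symm), rfl⟩
  exponent_two := by
    have : Nontrivial (kleinFour ha hb hab) :=
      ⟨⟨a, Or.inr (Or.inl rfl)⟩, 1, fun h => ha₁ (congrArg Subtype.val h)⟩
    refine (Monoid.exponent_eq_prime_iff Nat.prime_two).2 fun ⟨x, hx⟩ hx₁ => ?_
    rw [orderOf_mk]
    exact orderOf_eq_prime (sq_eq_one_of_mem_kleinFour hx) fun h => hx₁ (Subtype.ext h)

end Subgroup

end KleinFour

theorem sq_g₁ : g₁ ^ 2 = 1 := by decide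
theorem sq_g₂ : g₂ ^ 2 = 1 := by decide
theorem sq_g₃ : g₃ ^ 2 = 1 := by decide
theorem g₂_mul_g₁ : g₂ * g₁ = g₃ := by decide
theorem g₁_ne_one : g₁ ≠ 1 := by decide
theorem g₂_ne_one : g₂ ≠ 1 := by decide
theorem g₁_ne_g₂ : g₁ ≠ g₂ := by decide

theorem commute_g₁_g₂ : Commute g₁ g₂ :=
  commute_of_sq_eq_one sq_g₁ sq_g₂ (g₂_mul_g₁ ▸ sq_g₃)

theorem closure_g₁_g₂_g₃_eq_kleinFour :
    Subgroup.closure {g₁, g₂, g₃} = Subgroup.kleinFour sq_g₁ sq_g₂ commute_g₁_g₂ := by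
  rw [← g₂_mul_g₁, Subgroup.closure_eq_kleinFour]

/-- The elements `g₁ = (M_X M_Y M_X M_Z)²`, `g₂ = (M_Y M_Z M_Y M_X)²`, `g₃ = (M_Z M_X M_Z M_Y)²`
each have order 2, commute pairwise, and satisfy `g₂ * g₁ = g₃`; consequently
`{1, g₁, g₂, g₃}` is a subgroup of `G` isomorphic to the Klein four-group `ℤ/2 × ℤ/2`. -/
theorem stmt_3 :
    orderOf g₁ = 2 ∧ orderOf g₂ = 2 ∧ orderOf g₃ = 2 ∧
    Commute g₁ g₂ ∧ Commute g₁ g₃ ∧ Commute g₂ g₃ ∧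
    g₂ * g₁ = g₃ ∧
    ((Subgroup.closure {g₁, g₂, g₃} : Subgroup (GL (Fin 6) ℤ)) : Set (GL (Fin 6) ℤ))
      = {1, g₁, g₂, g₃} ∧
    Subgroup.closure {g₁, g₂, g₃} ≤ G ∧
    Nonempty ((Subgroup.closure {g₁, g₂, g₃} : Subgroup (GL (Fin 6) ℤ)) ≃* (Multiplicative (ZMod 2) × Multiplicative (ZMod 2))) := by
  have g₃_ne_one : g₃ ≠ 1 := g₂_mul_g₁ ▸ mul_ne_one_of_sq_eq_one sq_g₁ g₁_ne_g₂
  have : IsKleinFour _ := Subgroup.isKleinFour_kleinFour sq_g₁ sq_g₂ commute_g₁_g₂ g₁_ne_one g₂_ne_one g₁_ne_g₂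
  obtain ⟨e⟩ := IsKleinFour.nonempty_mulEquiv
    (G₁ := Subgroup.kleinFour sq_g₁ sq_g₂ commute_g₁_g₂) (G₂ := Multiplicative (ZMod 2 × ZMod 2))
  refine ⟨orderOf_eq_prime sq_g₁ g₁_ne_one, orderOf_eq_prime sq_g₂ g₂_ne_one,
    orderOf_eq_prime sq_g₃ g₃_ne_one, commute_g₁_g₂, ?_, ?_, g₂_mul_g₁, ?_, ?_, ?_⟩
  · simpa only [g₂_mul_g₁] using commute_g₁_g₂.mul_right (Commute.refl g₁)
  · simpa only [g₂_mul_g₁] using (Commute.refl g₂).mul_right commute_g₁_g₂.symm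
  · rw [closure_g₁_g₂_g₃_eq_kleinFour, Subgroup.coe_kleinFour, g₂_mul_g₁]
  · exact (Subgroup.closure_le G).2 <|
      Set.insert_subset hg₁ <| Set.insert_subset hg₂ <| Set.singleton_subset_iff.2 hg₃
  · rw [closure_g₁_g₂_g₃_eq_kleinFour]
    exact ⟨e.trans (MulEquiv.prodMultiplicative (ZMod 2) (ZMod 2))⟩
end

section
/- The conjugation relations M_X g₁ M_X⁻¹ = g₃⁻¹, M_Y g₁ M_Y⁻¹ = g₂⁻¹, and M_Z g₁ M_Z⁻¹ = g₁⁻¹ hold in GL(6,ℤ); consequently the subgroup of G generated by g₁, g₂, g₃ is a normal subgroup of G. -/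
open Matrix

/-!
Each of `M_X`, `M_Y`, `M_Z` is an involution, and a direct matrix computation shows that
conjugation by it sends every `gᵢ` to the inverse of some `gⱼ`. Hence it maps the subgroup
`⟨g₁, g₂, g₃⟩` into itself and, being its own inverse, normalizes it. Since these three
involutions generate `G`, all of `G` lies in the normalizer.
-/

namespace Subgroup

variable {Γ : Type*} [Group Γ]

theorem mem_normalizer_closure_of_conj_mem {s : Set Γ} {g : Γ}
    (hg : ∀ x ∈ s, g * x * g⁻¹ ∈ closure s) (hg' : ∀ x ∈ s, g⁻¹ * x * g ∈ closure s) :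
    g ∈ normalizer (closure s) := by
  rw [mem_normalizer_iff_map_conj_eq, MonoidHom.map_closure]
  refine le_antisymm ((closure_le _).2 ?_) ?_
  · rintro _ ⟨x, hx, rfl⟩
    exact hg x hx
  · rw [closure_le, ← MonoidHom.map_closure]
    exact fun x hx ↦ ⟨_, hg' x hx, by simp [mul_assoc]⟩

theorem mem_normalizer_closure_of_inv_eq {s : Set Γ} {g : Γ} (hg : g⁻¹ = g)
    (h : ∀ x ∈ s, g * x * g⁻¹ ∈ closure s) : g ∈ normalizer (closure s) :=
  mem_normalizer_closure_of_conj_mem h (by simpa only [hg] using h)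

end Subgroup

lemma MX_inv : MX⁻¹ = MX := Units.ext rfl
lemma MY_inv : MY⁻¹ = MY := Units.ext rfl
lemma MZ_inv : MZ⁻¹ = MZ := Units.ext rfl

lemma MX_conj_g₁ : MX * g₁ * MX⁻¹ = g₃⁻¹ := Units.ext (by decide)
lemma MX_conj_g₂ : MX * g₂ * MX⁻¹ = g₂⁻¹ := Units.ext (by decide)
lemma MX_conj_g₃ : MX * g₃ * MX⁻¹ = g₁⁻¹ := Units.ext (by decide)
lemma MY_conj_g₁ : MY * g₁ * MY⁻¹ = g₂⁻¹ := Units.ext (by decide)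
lemma MY_conj_g₂ : MY * g₂ * MY⁻¹ = g₁⁻¹ := Units.ext (by decide)
lemma MY_conj_g₃ : MY * g₃ * MY⁻¹ = g₃⁻¹ := Units.ext (by decide)
lemma MZ_conj_g₁ : MZ * g₁ * MZ⁻¹ = g₁⁻¹ := Units.ext (by decide)
lemma MZ_conj_g₂ : MZ * g₂ * MZ⁻¹ = g₃⁻¹ := Units.ext (by decide)
lemma MZ_conj_g₃ : MZ * g₃ * MZ⁻¹ = g₂⁻¹ := Units.ext (by decide)

lemma inv_mem_closure_g {x : GL (Fin 6) ℤ} (hx : x ∈ ({g₁, g₂, g₃} : Set (GL (Fin 6) ℤ))) :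
    x⁻¹ ∈ Subgroup.closure {g₁, g₂, g₃} :=
  inv_mem (Subgroup.subset_closure hx)

lemma MX_mem_normalizer : MX ∈ Subgroup.normalizer (Subgroup.closure {g₁, g₂, g₃}) := by
  refine Subgroup.mem_normalizer_closure_of_inv_eq MX_inv ?_
  rintro _ (rfl | rfl | rfl)
  · exact MX_conj_g₁ ▸ inv_mem_closure_g (by simp)
  · exact MX_conj_g₂ ▸ inv_mem_closure_g (by simp)
  · exact MX_conj_g₃ ▸ inv_mem_closure_g (by simp)

lemma MY_mem_normalizer : MY ∈ Subgroup.normalizer (Subgroup.closure {g₁, g₂, g₃}) := by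
  refine Subgroup.mem_normalizer_closure_of_inv_eq MY_inv ?_
  rintro _ (rfl | rfl | rfl)
  · exact MY_conj_g₁ ▸ inv_mem_closure_g (by simp)
  · exact MY_conj_g₂ ▸ inv_mem_closure_g (by simp)
  · exact MY_conj_g₃ ▸ inv_mem_closure_g (by simp)

lemma MZ_mem_normalizer : MZ ∈ Subgroup.normalizer (Subgroup.closure {g₁, g₂, g₃}) := by
  refine Subgroup.mem_normalizer_closure_of_inv_eq MZ_inv ?_
  rintro _ (rfl | rfl | rfl)
  · exact MZ_conj_g₁ ▸ inv_mem_closure_g (by simp)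
  · exact MZ_conj_g₂ ▸ inv_mem_closure_g (by simp)
  · exact MZ_conj_g₃ ▸ inv_mem_closure_g (by simp)

/-- Conjugation relations `M_X g₁ M_X⁻¹ = g₃⁻¹`, `M_Y g₁ M_Y⁻¹ = g₂⁻¹`, `M_Z g₁ M_Z⁻¹ = g₁⁻¹`
hold in `GL(6,ℤ)`; consequently the subgroup of `G` generated by `g₁, g₂, g₃` is a normal
subgroup of `G`. -/
theorem stmt_5 :
    MX * g₁ * MX⁻¹ = g₃⁻¹ ∧ MY * g₁ * MY⁻¹ = g₂⁻¹ ∧ MZ * g₁ * MZ⁻¹ = g₁⁻¹ ∧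
    ((Subgroup.closure {g₁, g₂, g₃}).subgroupOf G).Normal := by
  refine ⟨MX_conj_g₁, MY_conj_g₁, MZ_conj_g₁, ?_⟩
  have hle : Subgroup.closure {g₁, g₂, g₃} ≤ G := by
    rw [Subgroup.closure_le]
    rintro _ (rfl | rfl | rfl)
    exacts [hg₁, hg₂, hg₃]
  rw [Subgroup.normal_subgroupOf_iff_le_normalizer hle, G, Subgroup.closure_le]
  rintro _ (rfl | rfl | rfl)
  exacts [MX_mem_normalizer, MY_mem_normalizer, MZ_mem_normalizer]
end

section
/- There exists a (necessarily unique) surjective group homomorphism π from G onto the symmetric group of permutations of {0,1,2,3} with π(M_X) = (0 1), π(M_Y) = (0 2), π(M_Z) = (0 3), and its kernel equals the four-element subgroup {1, g₁, g₂, g₃}, which is isomorphic to the Klein four-group ℤ/2 × ℤ/2. In particular G is an extension of S₄ by the Klein four-group. -/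
open Matrix

/-!
Reduced mod 2, every element of `G` permutes the four vectors `triples i`, the indicators of the
coordinate triples `{0,1,2}`, `{2,4,5}`, `{1,3,5}`, `{0,3,4}`, and `M_X`, `M_Y`, `M_Z` act on them
as the transpositions `(0 1)`, `(0 2)`, `(0 3)`. This action is `π`; it is onto because the
transpositions through one point generate `S₄`.

Every row of an element of `G` is a signed standard basis vector, so mod 2 it acts on vectors by
a substitution of coordinates. If it fixes all four triples, the substitution is the identity,
since each coordinate is cut out by the triples containing it; so a kernel element is a diagonal
sign matrix `diag u`. The cubic form `cubicForm` is `G`-invariant, which makes three triple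
products of the signs equal to `1`, and `det = sign ∘ π` makes `∏ u = 1`. Only the sign patterns
of `1, g₁, g₂, g₃` survive, and as diagonal sign matrices these square to `1`.
-/

section FamilyPerm

variable {Γ n ι R : Type*} [Group Γ] [Fintype n] [DecidableEq n] [CommSemiring R]
  (ρ : Γ →* Matrix n n R) {w : ι → n → R} (hw : Function.Injective w)
  (hρw : ∀ γ i, ∃ j, ρ γ *ᵥ w i = w j)

noncomputable def familyPerm : Γ →* Equiv.Perm ι :=
  Equiv.Perm.equivUnitsEnd.symm.toMonoidHom.comp <| MonoidHom.toHomUnits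
    { toFun := fun γ i => (hρw γ i).choose
      map_one' := funext fun i => hw <| by
        rw [← (hρw 1 i).choose_spec, map_one, one_mulVec]; rfl
      map_mul' := fun γ δ => funext fun i => hw <| by
        rw [← (hρw (γ * δ) i).choose_spec, map_mul, ← mulVec_mulVec, (hρw δ i).choose_spec,
          (hρw γ _).choose_spec]; rfl }

theorem mulVec_eq_familyPerm (γ : Γ) (i : ι) : ρ γ *ᵥ w i = w (familyPerm ρ hw hρw γ i) :=
  (hρw γ i).choose_spec

theorem familyPerm_eq_iff {γ : Γ} {σ : Equiv.Perm ι} :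
    familyPerm ρ hw hρw γ = σ ↔ ∀ i, ρ γ *ᵥ w i = w (σ i) := by
  simp only [Equiv.ext_iff, ← hw.eq_iff, ← mulVec_eq_familyPerm]

end FamilyPerm

def rowMonomial (n R : Type*) [Fintype n] [DecidableEq n] [Semiring R] :
    Submonoid (Matrix n n R) where
  carrier := {A | ∀ a, ∃ b, ∃ u : Rˣ, A a = Pi.single b (u : R)}
  one_mem' a := ⟨a, 1, funext fun b => one_eq_pi_single⟩
  mul_mem' {A B} hA hB a := by
    obtain ⟨b, u, hb⟩ := hA a
    obtain ⟨c, v, hc⟩ := hB b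
    refine ⟨c, u * v, ?_⟩
    change A a ᵥ* B = _
    rw [hb, single_vecMul, row, hc, Units.val_mul, ← smul_eq_mul, Pi.single_smul']

theorem map_intCast_mulVec_apply {n : Type*} [Fintype n] [DecidableEq n] {A : Matrix n n ℤ}
    {a b : n} {u : ℤˣ} (h : A a = Pi.single b (u : ℤ)) (v : n → ZMod 2) :
    (A.map Int.cast *ᵥ v) a = v b := by
  have hu : ((u : ℤ) : ZMod 2) = 1 := by rcases Int.units_eq_one_or u with rfl | rfl <;> rfl
  simp [mulVec, dotProduct, h, Pi.single_apply, hu]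

theorem Equiv.Perm.closure_range_swap {α : Type*} [Finite α] [DecidableEq α] (a : α) :
    Subgroup.closure (Set.range (Equiv.swap a)) = ⊤ := by
  rw [eq_top_iff, ← Equiv.Perm.closure_isSwap, Subgroup.closure_le]
  rintro _ ⟨x, y, hxy, rfl⟩
  have mem (z : α) : Equiv.swap a z ∈ Subgroup.closure (Set.range (Equiv.swap a)) :=
    Subgroup.subset_closure ⟨z, rfl⟩
  by_cases hx : x = a
  · exact hx ▸ mem y
  by_cases hy : y = a
  · rw [hy, Equiv.swap_comm]; exact mem x
  have : Equiv.swap x y = Equiv.swap a x * Equiv.swap a y * (Equiv.swap a x)⁻¹ := by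
    rw [← Equiv.swap_apply_apply, Equiv.swap_apply_left, Equiv.swap_apply_of_ne_of_ne hy hxy.symm]
  rw [this]
  exact mul_mem (mul_mem (mem x) (mem y)) (inv_mem (mem x))

def G_generators : Set G := {⟨MX, hMX⟩, ⟨MY, hMY⟩, ⟨MZ, hMZ⟩}

theorem G_generators_inv : G_generators⁻¹ = G_generators := by
  have hX : (⟨MX, hMX⟩ : G)⁻¹ = ⟨MX, hMX⟩ := Subtype.ext (Units.ext rfl)
  have hY : (⟨MY, hMY⟩ : G)⁻¹ = ⟨MY, hMY⟩ := Subtype.ext (Units.ext rfl)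
  have hZ : (⟨MZ, hMZ⟩ : G)⁻¹ = ⟨MZ, hMZ⟩ := Subtype.ext (Units.ext rfl)
  rw [G_generators, Set.inv_insert, Set.inv_insert, Set.inv_singleton, hX, hY, hZ]

theorem G_mclosure : Submonoid.closure G_generators = ⊤ := by
  have hpre : ((↑) : G → GL (Fin 6) ℤ) ⁻¹' {MX, MY, MZ} = G_generators := by
    ext; simp [G_generators, Subtype.ext_iff]
  rw [← Set.union_self G_generators, ← congrArg (_ ∪ ·) G_generators_inv,
    ← Subgroup.closure_toSubmonoid, ← hpre]
  exact (congrArg _ Subgroup.closure_closure_coe_preimage).trans Subgroup.top_toSubmonoid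

theorem G_induction {motive : G → Prop} (one : motive 1)
    (mul : ∀ g h, motive g → motive h → motive (g * h))
    (hX : motive ⟨MX, hMX⟩) (hY : motive ⟨MY, hMY⟩) (hZ : motive ⟨MZ, hMZ⟩) (g : G) : motive g :=
  Submonoid.closure_induction (motive := fun g _ => motive g)
    (by rintro _ (rfl | rfl | rfl) <;> assumption) one (fun g h _ _ => mul g h)
    (G_mclosure ▸ Submonoid.mem_top g)

def reduceMod2 : G →* Matrix (Fin 6) (Fin 6) (ZMod 2) :=
  (Int.castRingHom (ZMod 2)).mapMatrix.toMonoidHom.comp ((Units.coeHom _).comp G.subtype)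

theorem reduceMod2_apply (g : G) :
    reduceMod2 g = ((g : GL (Fin 6) ℤ) : Matrix (Fin 6) (Fin 6) ℤ).map Int.cast := rfl

def triples : Fin 4 → Fin 6 → ZMod 2 :=
  ![![1, 1, 1, 0, 0, 0], ![0, 0, 1, 0, 1, 1], ![0, 1, 0, 1, 0, 1], ![1, 0, 0, 1, 1, 0]]

theorem triples_injective : Function.Injective triples := by decide

theorem reduceMod2_MX_mulVec (i : Fin 4) :
    reduceMod2 ⟨MX, hMX⟩ *ᵥ triples i = triples (Equiv.swap 0 1 i) := by
  revert i; decide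

theorem reduceMod2_MY_mulVec (i : Fin 4) :
    reduceMod2 ⟨MY, hMY⟩ *ᵥ triples i = triples (Equiv.swap 0 2 i) := by
  revert i; decide

theorem reduceMod2_MZ_mulVec (i : Fin 4) :
    reduceMod2 ⟨MZ, hMZ⟩ *ᵥ triples i = triples (Equiv.swap 0 3 i) := by
  revert i; decide

theorem reduceMod2_permutes_triples (g : G) (i : Fin 4) :
    ∃ j, reduceMod2 g *ᵥ triples i = triples j := by
  induction g using G_induction generalizing i with
  | one => exact ⟨i, by rw [map_one, one_mulVec]⟩
  | mul g h hg hh =>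
    obtain ⟨j, hj⟩ := hh i
    obtain ⟨k, hk⟩ := hg j
    exact ⟨k, by rw [map_mul, ← mulVec_mulVec, hj, hk]⟩
  | hX => exact ⟨_, reduceMod2_MX_mulVec i⟩
  | hY => exact ⟨_, reduceMod2_MY_mulVec i⟩
  | hZ => exact ⟨_, reduceMod2_MZ_mulVec i⟩

noncomputable def piHom : G →* Equiv.Perm (Fin 4) :=
  familyPerm reduceMod2 triples_injective reduceMod2_permutes_triples

theorem piHom_MX : piHom ⟨MX, hMX⟩ = Equiv.swap 0 1 :=
  (familyPerm_eq_iff _ _ _).2 reduceMod2_MX_mulVec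
theorem piHom_MY : piHom ⟨MY, hMY⟩ = Equiv.swap 0 2 :=
  (familyPerm_eq_iff _ _ _).2 reduceMod2_MY_mulVec
theorem piHom_MZ : piHom ⟨MZ, hMZ⟩ = Equiv.swap 0 3 :=
  (familyPerm_eq_iff _ _ _).2 reduceMod2_MZ_mulVec

theorem eq_piHom {π : G →* Equiv.Perm (Fin 4)} (hX : π ⟨MX, hMX⟩ = Equiv.swap 0 1)
    (hY : π ⟨MY, hMY⟩ = Equiv.swap 0 2) (hZ : π ⟨MZ, hMZ⟩ = Equiv.swap 0 3) : π = piHom :=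
  MonoidHom.eq_of_eqOn_denseM G_mclosure <| by
    rintro _ (rfl | rfl | rfl)
    · exact hX.trans piHom_MX.symm
    · exact hY.trans piHom_MY.symm
    · exact hZ.trans piHom_MZ.symm

theorem piHom_surjective : Function.Surjective piHom := by
  rw [← MonoidHom.range_eq_top, eq_top_iff, ← Equiv.Perm.closure_range_swap 0,
    Subgroup.closure_le]
  rintro _ ⟨k, rfl⟩
  fin_cases k
  · exact ⟨1, (map_one _).trans (Equiv.swap_self _).symm⟩
  · exact ⟨_, piHom_MX⟩
  · exact ⟨_, piHom_MY⟩
  · exact ⟨_, piHom_MZ⟩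

theorem val_mem_rowMonomial (g : G) :
    ((g : GL (Fin 6) ℤ) : Matrix (Fin 6) (Fin 6) ℤ) ∈ rowMonomial (Fin 6) ℤ := by
  induction g using G_induction with
  | one => exact one_mem _
  | mul g h hg hh => exact mul_mem hg hh
  | hX => change ∀ a, ∃ b, ∃ u : ℤˣ, MXmat a = Pi.single b (u : ℤ); decide
  | hY => change ∀ a, ∃ b, ∃ u : ℤˣ, MYmat a = Pi.single b (u : ℤ); decide
  | hZ => change ∀ a, ∃ b, ∃ u : ℤˣ, MZmat a = Pi.single b (u : ℤ); decide

theorem triples_separate (a b : Fin 6) (h : ∀ i, triples i a = triples i b) : a = b := by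
  revert a b; decide

theorem exists_diagonal_of_piHom_eq_one {g : G} (hg : piHom g = 1) :
    ∃ u : Fin 6 → ℤˣ,
      ((g : GL (Fin 6) ℤ) : Matrix (Fin 6) (Fin 6) ℤ) = diagonal fun a => (u a : ℤ) := by
  choose f u hfu using val_mem_rowMonomial g
  have hfix : ∀ i, reduceMod2 g *ᵥ triples i = triples i := (familyPerm_eq_iff _ _ _).1 hg
  have hf (a : Fin 6) : f a = a := triples_separate _ _ fun i => by
    rw [← map_intCast_mulVec_apply (hfu a) (triples i), ← reduceMod2_apply, hfix]
  refine ⟨u, ext fun a c => ?_⟩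
  rw [hfu a, hf a, diagonal_apply, Pi.single_apply]
  exact if_congr eq_comm rfl rfl

-- Proportional to the average of the monomial `x 1 * x 2 * x 5` over `G`.
def cubicForm (x : Fin 6 → ℤ) : ℤ :=
  x 1 * x 2 * x 5 + x 0 * x 2 * x 4 + x 0 * x 1 * x 3 - x 3 * x 4 * x 5

theorem cubicForm_mulVec (g : G) (x : Fin 6 → ℤ) :
    cubicForm (((g : GL (Fin 6) ℤ) : Matrix (Fin 6) (Fin 6) ℤ) *ᵥ x) = cubicForm x := by
  induction g using G_induction generalizing x with
  | one => rw [OneMemClass.coe_one, Units.val_one, one_mulVec]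
  | mul g h hg hh => rw [Subgroup.coe_mul, Units.val_mul, ← mulVec_mulVec, hg, hh]
  | hX => simp [cubicForm, mulVec, dotProduct, Fin.sum_univ_succ, MX, MXmat]; ring
  | hY => simp [cubicForm, mulVec, dotProduct, Fin.sum_univ_succ, MY, MYmat]; ring
  | hZ => simp [cubicForm, mulVec, dotProduct, Fin.sum_univ_succ, MZ, MZmat]; ring

theorem det_MXmat : MXmat.det = -1 := by
  simp [MXmat, det_succ_row_zero, Fin.sum_univ_succ, Fin.succAbove_of_lt_succ,
    Fin.succAbove_of_succ_le]

theorem det_MYmat : MYmat.det = -1 := by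
  simp [MYmat, det_succ_row_zero, Fin.sum_univ_succ, Fin.succAbove_of_lt_succ,
    Fin.succAbove_of_succ_le]

theorem det_MZmat : MZmat.det = -1 := by
  simp [MZmat, det_succ_row_zero, Fin.sum_univ_succ, Fin.succAbove_of_lt_succ,
    Fin.succAbove_of_succ_le]

theorem det_eq_sign_piHom (g : G) :
    ((g : GL (Fin 6) ℤ) : Matrix (Fin 6) (Fin 6) ℤ).det = Equiv.Perm.sign (piHom g) := by
  have hdet : GeneralLinearGroup.det.comp G.subtype = Equiv.Perm.sign.comp piHom := by
    refine MonoidHom.eq_of_eqOn_denseM G_mclosure ?_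
    rintro _ (rfl | rfl | rfl) <;> refine Units.ext ?_ <;>
      simp only [MonoidHom.comp_apply, piHom_MX, piHom_MY, piHom_MZ,
        Equiv.Perm.sign_swap (show (0 : Fin 4) ≠ 1 by decide),
        Equiv.Perm.sign_swap (show (0 : Fin 4) ≠ 2 by decide),
        Equiv.Perm.sign_swap (show (0 : Fin 4) ≠ 3 by decide), Subgroup.coe_subtype,
        GeneralLinearGroup.val_det_apply]
    exacts [det_MXmat, det_MYmat, det_MZmat]
  have := congrArg Units.val (DFunLike.congr_fun hdet g)
  rwa [MonoidHom.comp_apply, MonoidHom.comp_apply, GeneralLinearGroup.val_det_apply] at this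

theorem sign_pattern_cases (u : Fin 6 → ℤˣ) (h125 : (u 1 * u 2 * u 5 : ℤ) = 1)
    (h024 : (u 0 * u 2 * u 4 : ℤ) = 1) (h013 : (u 0 * u 1 * u 3 : ℤ) = 1)
    (hprod : ∏ a, (u a : ℤ) = 1) :
    (fun a => (u a : ℤ)) = 1 ∨ (fun a => (u a : ℤ)) = ![1, -1, -1, -1, -1, 1] ∨
      (fun a => (u a : ℤ)) = ![-1, -1, 1, 1, -1, -1] ∨
      (fun a => (u a : ℤ)) = ![-1, 1, -1, -1, 1, -1] := by
  revert u; decide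

theorem val_g₁ : (g₁ : Matrix (Fin 6) (Fin 6) ℤ) = diagonal ![1, -1, -1, -1, -1, 1] := by decide
theorem val_g₂ : (g₂ : Matrix (Fin 6) (Fin 6) ℤ) = diagonal ![-1, -1, 1, 1, -1, -1] := by decide
theorem val_g₃ : (g₃ : Matrix (Fin 6) (Fin 6) ℤ) = diagonal ![-1, 1, -1, -1, 1, -1] := by decide

theorem piHom_g₁ : piHom ⟨g₁, hg₁⟩ = 1 := by
  have : (⟨g₁, hg₁⟩ : G) = (⟨MX, hMX⟩ * ⟨MY, hMY⟩ * ⟨MX, hMX⟩ * ⟨MZ, hMZ⟩) ^ 2 :=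
    Subtype.ext <| by simp only [g₁, Subgroup.coe_pow, Subgroup.coe_mul]
  rw [this, map_pow, map_mul, map_mul, map_mul, piHom_MX, piHom_MY, piHom_MZ]
  decide

theorem piHom_g₂ : piHom ⟨g₂, hg₂⟩ = 1 := by
  have : (⟨g₂, hg₂⟩ : G) = (⟨MY, hMY⟩ * ⟨MZ, hMZ⟩ * ⟨MY, hMY⟩ * ⟨MX, hMX⟩) ^ 2 :=
    Subtype.ext <| by simp only [g₂, Subgroup.coe_pow, Subgroup.coe_mul]
  rw [this, map_pow, map_mul, map_mul, map_mul, piHom_MX, piHom_MY, piHom_MZ]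
  decide

theorem piHom_g₃ : piHom ⟨g₃, hg₃⟩ = 1 := by
  have : (⟨g₃, hg₃⟩ : G) = (⟨MZ, hMZ⟩ * ⟨MX, hMX⟩ * ⟨MZ, hMZ⟩ * ⟨MY, hMY⟩) ^ 2 :=
    Subtype.ext <| by simp only [g₃, Subgroup.coe_pow, Subgroup.coe_mul]
  rw [this, map_pow, map_mul, map_mul, map_mul, piHom_MX, piHom_MY, piHom_MZ]
  decide

theorem eq_one_or_g_of_piHom_eq_one {g : G} (hg : piHom g = 1) :
    g = 1 ∨ g = ⟨g₁, hg₁⟩ ∨ g = ⟨g₂, hg₂⟩ ∨ g = ⟨g₃, hg₃⟩ := by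
  obtain ⟨u, hu⟩ := exists_diagonal_of_piHom_eq_one hg
  have hcubic (x : Fin 6 → ℤ) : cubicForm (fun a => u a * x a) = cubicForm x := by
    rw [← cubicForm_mulVec g x, hu]
    exact congrArg cubicForm (funext fun a => (mulVec_diagonal (fun a => (u a : ℤ)) x a).symm)
  have h125 := hcubic ![0, 1, 1, 0, 0, 1]
  have h024 := hcubic ![1, 0, 1, 0, 1, 0]
  have h013 := hcubic ![1, 1, 0, 1, 0, 0]
  have hprod : ∏ a, (u a : ℤ) = 1 := by
    rw [← det_diagonal, ← hu, det_eq_sign_piHom, hg, map_one, Units.val_one]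
  simp only [cubicForm, cons_val_one, cons_val_zero, cons_val, mul_one, mul_zero, zero_mul,
    add_zero, zero_add, sub_zero] at h125 h024 h013
  have hval (M : GL (Fin 6) ℤ) (hM : M ∈ G)
      (h : (M : Matrix (Fin 6) (Fin 6) ℤ) = diagonal fun a => (u a : ℤ)) : g = ⟨M, hM⟩ :=
    Subtype.ext (Units.ext (hu.trans h.symm))
  rcases sign_pattern_cases u h125 h024 h013 hprod with h | h | h | h
  · exact Or.inl (hval 1 (one_mem G) (by rw [h]; exact diagonal_one.symm))
  · exact Or.inr (Or.inl (hval g₁ hg₁ (by rw [h, val_g₁])))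
  · exact Or.inr (Or.inr (Or.inl (hval g₂ hg₂ (by rw [h, val_g₂]))))
  · exact Or.inr (Or.inr (Or.inr (hval g₃ hg₃ (by rw [h, val_g₃]))))

theorem coe_piHom_ker :
    (piHom.ker : Set G) = {1, ⟨g₁, hg₁⟩, ⟨g₂, hg₂⟩, ⟨g₃, hg₃⟩} := by
  ext g
  simp only [SetLike.mem_coe, MonoidHom.mem_ker, Set.mem_insert_iff, Set.mem_singleton_iff]
  refine ⟨eq_one_or_g_of_piHom_eq_one, ?_⟩
  rintro (rfl | rfl | rfl | rfl)
  exacts [map_one piHom, piHom_g₁, piHom_g₂, piHom_g₃]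

theorem sq_eq_one_of_piHom_eq_one {g : G} (hg : piHom g = 1) : g ^ 2 = 1 := by
  obtain ⟨u, hu⟩ := exists_diagonal_of_piHom_eq_one hg
  refine Subtype.ext (Units.ext ?_)
  rw [Subgroup.coe_pow, Units.val_pow_eq_pow_val, hu, diagonal_pow, OneMemClass.coe_one,
    Units.val_one, ← diagonal_one]
  congr 1
  funext a
  rw [Pi.pow_apply, ← Units.val_pow_eq_pow_val, Int.units_sq, Units.val_one]

instance : IsKleinFour piHom.ker where
  card_four := by
    have hne (x y : G) (a : Fin 6)
        (h : ((x : GL (Fin 6) ℤ) : Matrix (Fin 6) (Fin 6) ℤ) a a ≠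
          ((y : GL (Fin 6) ℤ) : Matrix (Fin 6) (Fin 6) ℤ) a a) : x ≠ y :=
      fun hxy => h (hxy ▸ rfl)
    rw [← SetLike.coe_sort_coe, coe_piHom_ker, Nat.card_coe_set_eq,
      Set.ncard_insert_of_notMem, Set.ncard_insert_of_notMem, Set.ncard_pair]
    · exact hne _ _ 1 (by simp [val_g₂, val_g₃])
    · simp only [Set.mem_insert_iff, Set.mem_singleton_iff, not_or]
      exact ⟨hne _ _ 0 (by simp [val_g₁, val_g₂]), hne _ _ 0 (by simp [val_g₁, val_g₃])⟩
    · simp only [Set.mem_insert_iff, Set.mem_singleton_iff, not_or]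
      exact ⟨hne _ _ 1 (by simp [val_g₁]), hne _ _ 0 (by simp [val_g₂]),
        hne _ _ 0 (by simp [val_g₃])⟩
  exponent_two := by
    have hg₁ne : (⟨⟨g₁, hg₁⟩, piHom_g₁⟩ : piHom.ker) ≠ 1 := fun h => by
      simpa [val_g₁] using congrArg (fun x : piHom.ker => ((x : G) : GL (Fin 6) ℤ).val 1 1) h
    have : Nontrivial piHom.ker := ⟨⟨_, _, hg₁ne⟩⟩
    refine (Monoid.exponent_eq_prime_iff Nat.prime_two).2 fun g hg => orderOf_eq_prime ?_ hg
    exact Subtype.ext (sq_eq_one_of_piHom_eq_one g.2)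

/-- There is a unique group homomorphism `π : G → S₄` with `π(M_X) = (0 1)`, `π(M_Y) = (0 2)`,
`π(M_Z) = (0 3)`; it is surjective and its kernel is the four-element subgroup
`{1, g₁, g₂, g₃}`, which is isomorphic to the Klein four-group. In particular `G` is an
extension of `S₄` by the Klein four-group. -/
theorem stmt_6 :
    (∃! π : G →* Equiv.Perm (Fin 4),
      π ⟨MX, hMX⟩ = Equiv.swap 0 1 ∧ π ⟨MY, hMY⟩ = Equiv.swap 0 2 ∧
        π ⟨MZ, hMZ⟩ = Equiv.swap 0 3) ∧
    ∀ π : G →* Equiv.Perm (Fin 4),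
      (π ⟨MX, hMX⟩ = Equiv.swap 0 1 ∧ π ⟨MY, hMY⟩ = Equiv.swap 0 2 ∧
        π ⟨MZ, hMZ⟩ = Equiv.swap 0 3) →
      Function.Surjective π ∧
      (π.ker : Set G) = {1, ⟨g₁, hg₁⟩, ⟨g₂, hg₂⟩, ⟨g₃, hg₃⟩} ∧
      Nonempty (π.ker ≃* (Multiplicative (ZMod 2) × Multiplicative (ZMod 2))) := by
  refine ⟨⟨piHom, ⟨piHom_MX, piHom_MY, piHom_MZ⟩, fun π hπ => eq_piHom hπ.1 hπ.2.1 hπ.2.2⟩, ?_⟩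
  rintro π ⟨hX, hY, hZ⟩
  obtain rfl := eq_piHom hX hY hZ
  obtain ⟨e⟩ :=
    IsKleinFour.nonempty_mulEquiv (G₁ := piHom.ker) (G₂ := Multiplicative (ZMod 2 × ZMod 2))
  exact ⟨piHom_surjective, coe_piHom_ker, ⟨e.trans (MulEquiv.prodMultiplicative _ _)⟩⟩
end

section
/- Define the map ψ on the four-element set {1, g₁, g₂, g₃} by ψ(1) = 1, ψ(g₁) = (0 3)(1 2), ψ(g₂) = (0 1)(2 3), ψ(g₃) = (0 2)(1 3), with values in the permutations of {0,1,2,3}. Then ψ is an injective group homomorphism from ker π onto the Klein four subgroup V = {1, (0 1)(2 3), (0 2)(1 3), (0 3)(1 2)} of S₄, and it is equivariant for the conjugation actions: for every g ∈ G and every k ∈ {1, g₁, g₂, g₃}, ψ(g k g⁻¹) = π(g) ψ(k) π(g)⁻¹. (This identifies the kernel K₄, as an S₄-module, with the normal Klein subgroup of S₄ with conjugation action.) -/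
open Matrix

/-! `ψ` is given by its table `toKlein` on the four matrices `1, g₁, g₂, g₃`; that it is
multiplicative and injective there is a finite computation with `6 × 6` integer matrices.
For equivariance it suffices to treat the generators `M_X, M_Y, M_Z` (again a finite computation,
using `π M_X = (0 1)` etc.): because `ker π` is normal, the elements `g` along which `ψ` turns
conjugation by `g` into conjugation by `π g` form a subgroup. -/

section Intertwining

variable {H P : Type*} [Group H] [Group P]

def intertwiningSubgroup (N : Subgroup H) [N.Normal] (ρ : H →* P) (ψ : H → P) : Subgroup H where
  carrier := {g | ∀ k ∈ N, ψ (g * k * g⁻¹) = ρ g * ψ k * (ρ g)⁻¹}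
  one_mem' := by simp
  mul_mem' {g h} hg hh k hk := by
    have hconj : ψ (g * h * k * (g * h)⁻¹) = ψ (g * (h * k * h⁻¹) * g⁻¹) := by group
    rw [hconj, hg _ (‹N.Normal›.conj_mem k hk h), hh k hk]
    simp only [map_mul, _root_.mul_inv_rev, mul_assoc]
  inv_mem' {g} hg k hk := by
    have hk' : g⁻¹ * k * g⁻¹⁻¹ ∈ N := ‹N.Normal›.conj_mem k hk g⁻¹
    have h := hg _ hk'
    rw [show g * (g⁻¹ * k * g⁻¹⁻¹) * g⁻¹ = k by group] at h
    rw [h, map_inv]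
    group

theorem conj_intertwining_of_closure_eq_top {N : Subgroup H} [N.Normal] {ρ : H →* P}
    {ψ : H → P} {S : Set H} (hS : Subgroup.closure S = ⊤)
    (hgen : ∀ s ∈ S, ∀ k ∈ N, ψ (s * k * s⁻¹) = ρ s * ψ k * (ρ s)⁻¹)
    (g : H) {k : H} (hk : k ∈ N) : ψ (g * k * g⁻¹) = ρ g * ψ k * (ρ g)⁻¹ := by
  have hle : Subgroup.closure S ≤ intertwiningSubgroup N ρ ψ := Subgroup.closure_le _ |>.2 hgen
  exact (hS ▸ hle) (Subgroup.mem_top g) k hk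

end Intertwining

def kerList : List (GL (Fin 6) ℤ) := [1, g₁, g₂, g₃]

def toKlein (u : GL (Fin 6) ℤ) : Equiv.Perm (Fin 4) :=
  if u = g₁ then Equiv.swap 0 3 * Equiv.swap 1 2
  else if u = g₂ then Equiv.swap 0 1 * Equiv.swap 2 3
  else if u = g₃ then Equiv.swap 0 2 * Equiv.swap 1 3
  else 1

@[simp] theorem toKlein_one : toKlein 1 = 1 := by decide
@[simp] theorem toKlein_g₁ : toKlein g₁ = Equiv.swap 0 3 * Equiv.swap 1 2 := by decide
@[simp] theorem toKlein_g₂ : toKlein g₂ = Equiv.swap 0 1 * Equiv.swap 2 3 := by decide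
@[simp] theorem toKlein_g₃ : toKlein g₃ = Equiv.swap 0 2 * Equiv.swap 1 3 := by decide

theorem toKlein_mul : ∀ u ∈ kerList, ∀ v ∈ kerList, toKlein (u * v) = toKlein u * toKlein v := by
  decide

theorem toKlein_injOn : ∀ u ∈ kerList, ∀ v ∈ kerList, toKlein u = toKlein v → u = v := by
  decide

theorem toKlein_conj_MX : ∀ u ∈ kerList,
    toKlein (MX * u * MX⁻¹) = Equiv.swap 0 1 * toKlein u * (Equiv.swap 0 1)⁻¹ := by
  decide

theorem toKlein_conj_MY : ∀ u ∈ kerList,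
    toKlein (MY * u * MY⁻¹) = Equiv.swap 0 2 * toKlein u * (Equiv.swap 0 2)⁻¹ := by
  decide

theorem toKlein_conj_MZ : ∀ u ∈ kerList,
    toKlein (MZ * u * MZ⁻¹) = Equiv.swap 0 3 * toKlein u * (Equiv.swap 0 3)⁻¹ := by
  decide

section Kernel

variable {π : G →* Equiv.Perm (Fin 4)}

theorem coe_mem_kerList_of_mem_ker
    (hker : (π.ker : Set G) = {1, ⟨g₁, hg₁⟩, ⟨g₂, hg₂⟩, ⟨g₃, hg₃⟩}) {k : G} (hk : k ∈ π.ker) :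
    (k : GL (Fin 6) ℤ) ∈ kerList := by
  rw [← SetLike.mem_coe, hker] at hk
  rcases hk with rfl | rfl | rfl | rfl <;> simp [kerList]

theorem range_coe_ker (hker : (π.ker : Set G) = {1, ⟨g₁, hg₁⟩, ⟨g₂, hg₂⟩, ⟨g₃, hg₃⟩}) :
    Set.range (fun k : π.ker => ((k : G) : GL (Fin 6) ℤ)) = {1, g₁, g₂, g₃} := by
  rw [Set.range_comp' Subtype.val Subtype.val, Subtype.range_coe_subtype, SetLike.setOfPred_mem_eq,
    hker]
  simp [Set.image_insert_eq]

theorem toKlein_conj_of_mem_ker (hX : π ⟨MX, hMX⟩ = Equiv.swap 0 1)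
    (hY : π ⟨MY, hMY⟩ = Equiv.swap 0 2) (hZ : π ⟨MZ, hMZ⟩ = Equiv.swap 0 3)
    (hker : (π.ker : Set G) = {1, ⟨g₁, hg₁⟩, ⟨g₂, hg₂⟩, ⟨g₃, hg₃⟩}) (g : G) {k : G}
    (hk : k ∈ π.ker) :
    toKlein ((g * k * g⁻¹ : G) : GL (Fin 6) ℤ) = π g * toKlein (k : GL (Fin 6) ℤ) * (π g)⁻¹ := by
  refine conj_intertwining_of_closure_eq_top (N := π.ker) (ψ := fun x : G => toKlein x)
    Subgroup.closure_closure_coe_preimage ?_ g hk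
  rintro ⟨s, hs⟩ hsgen k hk
  have hkL := coe_mem_kerList_of_mem_ker hker hk
  rcases hsgen with rfl | rfl | rfl
  · rw [hX]; exact toKlein_conj_MX _ hkL
  · rw [hY]; exact toKlein_conj_MY _ hkL
  · rw [hZ]; exact toKlein_conj_MZ _ hkL

end Kernel

/-- The map `ψ` on `ker π = {1, g₁, g₂, g₃}` given by `ψ(1) = 1`, `ψ(g₁) = (0 3)(1 2)`,
`ψ(g₂) = (0 1)(2 3)`, `ψ(g₃) = (0 2)(1 3)` is an injective group homomorphism from `ker π`
onto the Klein four subgroup `V` of `S₄`, equivariant for the conjugation actions. -/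
theorem stmt_8 (π : G →* Equiv.Perm (Fin 4))
    (hX : π ⟨MX, hMX⟩ = Equiv.swap 0 1) (hY : π ⟨MY, hMY⟩ = Equiv.swap 0 2)
    (hZ : π ⟨MZ, hMZ⟩ = Equiv.swap 0 3)
    (hker : (π.ker : Set G) = {1, ⟨g₁, hg₁⟩, ⟨g₂, hg₂⟩, ⟨g₃, hg₃⟩}) :
    ∃ ψ : π.ker →* Equiv.Perm (Fin 4),
      Function.Injective ψ ∧
      (∀ k : π.ker,
        ((k : G) = ⟨g₁, hg₁⟩ → ψ k = Equiv.swap 0 3 * Equiv.swap 1 2) ∧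
        ((k : G) = ⟨g₂, hg₂⟩ → ψ k = Equiv.swap 0 1 * Equiv.swap 2 3) ∧
        ((k : G) = ⟨g₃, hg₃⟩ → ψ k = Equiv.swap 0 2 * Equiv.swap 1 3)) ∧
      (ψ.range : Set (Equiv.Perm (Fin 4))) =
        {1, Equiv.swap 0 1 * Equiv.swap 2 3, Equiv.swap 0 2 * Equiv.swap 1 3,
          Equiv.swap 0 3 * Equiv.swap 1 2} ∧
      ∀ (g : G) (k : π.ker),
        ψ ⟨g * (k : G) * g⁻¹, (MonoidHom.normal_ker π).conj_mem (k : G) k.2 g⟩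
          = π g * ψ k * (π g)⁻¹ := by
  have hmem (k : π.ker) : ((k : G) : GL (Fin 6) ℤ) ∈ kerList :=
    coe_mem_kerList_of_mem_ker hker k.2
  let ψ : π.ker →* Equiv.Perm (Fin 4) := MonoidHom.mk' (fun k => toKlein ((k : G) : GL (Fin 6) ℤ))
    fun a b => toKlein_mul _ (hmem a) _ (hmem b)
  refine ⟨ψ, fun a b hab => ?_,
    fun k => ⟨fun hk => by simp [ψ, hk], fun hk => by simp [ψ, hk], fun hk => by simp [ψ, hk]⟩,
    ?_, fun g k => toKlein_conj_of_mem_ker hX hY hZ hker g k.2⟩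
  · exact Subtype.ext (Subtype.ext (toKlein_injOn _ (hmem a) _ (hmem b) hab))
  · rw [MonoidHom.coe_range]
    change Set.range (toKlein ∘ fun k : π.ker => ((k : G) : GL (Fin 6) ℤ)) = _
    rw [Set.range_comp, range_coe_ker hker]
    simp only [Set.image_insert_eq, Set.image_singleton, toKlein_one, toKlein_g₁, toKlein_g₂,
      toKlein_g₃]
    ext σ
    simp only [Set.mem_insert_iff, Set.mem_singleton_iff]
    tauto
end

section
/- The extension 1 → K₄ → G → S₄ → 1 is not split: there is no group homomorphism s : Perm({0,1,2,3}) → G with π ∘ s equal to the identity on Perm({0,1,2,3}). -/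
open Matrix

/-!
Every `x ∈ G` permutes the twelve vectors `±eᵢ`, and `π x` permutes the four vertices `0, 1, 2, 3`;
we record the pair by the list of images of these sixteen points. Starting from the tables of the
generators, the 96 tables of `K₄ · W`, for 24 words `W` lying over the elements of `S₄`, form a list
closed under left multiplication by the generators, so it contains the table of `(x, π x)` for every
`x ∈ G`. Each table in it lying over the 4-cycle `(0 1 2 3)` sends the first basis vector to its
negative after four steps. Hence no lift of the 4-cycle has order 4, whereas a section would map the
4-cycle to such a lift.
-/

namespace ImageTable

def apply (t : List ℕ) (k : ℕ) : ℕ := t.getD k k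

def comp (s t : List ℕ) : List ℕ :=
  (List.range (max s.length t.length)).map fun k => apply s (apply t k)

theorem apply_of_length_le {t : List ℕ} {k : ℕ} (h : t.length ≤ k) : apply t k = k :=
  List.getD_eq_default _ _ h

theorem apply_comp (s t : List ℕ) (k : ℕ) : apply (comp s t) k = apply s (apply t k) := by
  by_cases hk : k < max s.length t.length
  · simp [apply, comp, hk]
  · have hlen : (comp s t).length ≤ k := by
      simp only [comp, List.length_map, List.length_range]; omega
    rw [apply_of_length_le hlen, apply_of_length_le (t := t) (by omega),
      apply_of_length_le (by omega)]

theorem apply_range (N k : ℕ) : apply (List.range N) k = k := by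
  by_cases hk : k < N
  · simp [apply, hk]
  · exact apply_of_length_le (by simpa using hk)

end ImageTable

open ImageTable

/-- `signedBasis n (2 * i)` is `eᵢ`, `signedBasis n (2 * i + 1)` is `-eᵢ`, and larger indices
give `0`. -/
def signedBasis (n : ℕ) (k : ℕ) : Fin n → ℤ :=
  fun i => if k = 2 * i then 1 else if k = 2 * i + 1 then -1 else 0

theorem signedBasis_of_le {n k : ℕ} (h : 2 * n ≤ k) : signedBasis n k = 0 := by
  ext i
  simp only [signedBasis, Pi.zero_apply]
  split_ifs <;> omega

/-- The table `t` records how `(x, σ)` moves the points `0, …, 2n + m - 1`: the first `2n` are the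
vectors `±eᵢ`, the last `m` are `2n + a` for `a : Fin m`. -/
def Realizes {n m : ℕ} (x : Matrix (Fin n) (Fin n) ℤ) (σ : Equiv.Perm (Fin m)) (t : List ℕ) :
    Prop :=
  (∀ k, x *ᵥ signedBasis n k = signedBasis n (apply t k)) ∧
    ∀ a : Fin m, apply t (2 * n + a) = 2 * n + σ a

namespace Realizes

variable {n m : ℕ} {x y : Matrix (Fin n) (Fin n) ℤ} {σ τ : Equiv.Perm (Fin m)} {s t : List ℕ}

theorem one (N : ℕ) :
    Realizes (1 : Matrix (Fin n) (Fin n) ℤ) (1 : Equiv.Perm (Fin m)) (List.range N) :=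
  ⟨fun k => by simp [apply_range], fun a => by simp [apply_range]⟩

theorem mul (hx : Realizes x σ s) (hy : Realizes y τ t) : Realizes (x * y) (σ * τ) (comp s t) :=
  ⟨fun k => by rw [← mulVec_mulVec, hy.1, hx.1, apply_comp],
    fun a => by rw [apply_comp, hy.2, hx.2, Equiv.Perm.mul_apply]⟩

theorem of_forall_lt (hlen : t.length ≤ 2 * n + m)
    (hvec : ∀ k < 2 * n + m, x *ᵥ signedBasis n k = signedBasis n (apply t k))
    (hpt : ∀ a : Fin m, apply t (2 * n + a) = 2 * n + σ a) : Realizes x σ t := by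
  refine ⟨fun k => ?_, hpt⟩
  by_cases hk : k < 2 * n + m
  · exact hvec k hk
  · rw [apply_of_length_le (by omega), signedBasis_of_le (by omega), mulVec_zero]

end Realizes

def tabX : List ℕ := [9, 8, 11, 10, 4, 5, 7, 6, 1, 0, 3, 2, 13, 12, 14, 15]
def tabY : List ℕ := [7, 6, 2, 3, 11, 10, 1, 0, 9, 8, 5, 4, 14, 13, 12, 15]
def tabZ : List ℕ := [0, 1, 7, 6, 9, 8, 3, 2, 5, 4, 11, 10, 15, 13, 14, 12]

theorem realizes_MX : Realizes MXmat (Equiv.swap (0 : Fin 4) 1) tabX :=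
  Realizes.of_forall_lt (by decide) (by decide) (by decide)
theorem realizes_MY : Realizes MYmat (Equiv.swap (0 : Fin 4) 2) tabY :=
  Realizes.of_forall_lt (by decide) (by decide) (by decide)
theorem realizes_MZ : Realizes MZmat (Equiv.swap (0 : Fin 4) 3) tabZ :=
  Realizes.of_forall_lt (by decide) (by decide) (by decide)

def word (w : List (List ℕ)) : List ℕ := w.foldr comp (List.range 16)

def kleinTables : List (List ℕ) :=
  [List.range 16, word [tabX, tabY, tabX, tabZ, tabX, tabY, tabX, tabZ],
    word [tabY, tabZ, tabY, tabX, tabY, tabZ, tabY, tabX],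
    word [tabZ, tabX, tabZ, tabY, tabZ, tabX, tabZ, tabY]]

/-- `1, X, Y, Z` lie over coset representatives of the stabiliser of `0` in `S₄`, and the six
words after them over the elements of that stabiliser, written in `XYX = (1 2)` and
`XZX = (1 3)`. -/
def transversalTables : List (List ℕ) :=
  [[], [tabX], [tabY], [tabZ]].flatMap fun u =>
    [[], [tabX, tabY, tabX], [tabX, tabZ, tabX], [tabX, tabY, tabZ, tabX], [tabX, tabZ, tabY, tabX],
      [tabX, tabY, tabZ, tabY, tabX]].map fun v => word (u ++ v)

def groupTables : List (List ℕ) := kleinTables.flatMap fun k => transversalTables.map (comp k)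

theorem comp_mem_groupTables :
    ∀ g ∈ [tabX, tabY, tabZ], ∀ t ∈ groupTables, comp g t ∈ groupTables := by
  decide +kernel

theorem Subgroup.mk_mem_closure_graph {M H : Type*} [Group M] [Group H] {S : Set M}
    (f : Subgroup.closure S →* H) (g : Subgroup.closure S) :
    ((g : M), f g) ∈
      Subgroup.closure (Set.range fun s : S => ((s : M), f ⟨s, Subgroup.subset_closure s.2⟩)) := by
  obtain ⟨g, hg⟩ := g
  induction hg using Subgroup.closure_induction with
  | mem x hx => exact Subgroup.subset_closure ⟨⟨x, hx⟩, rfl⟩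
  | one =>
    have h := map_one f
    exact h ▸ one_mem _
  | mul x y hx hy ihx ihy =>
    have h := mul_mem ihx ihy
    rw [Prod.mk_mul_mk, ← map_mul] at h
    exact h
  | inv x hx ih =>
    have h := inv_mem ih
    rw [Prod.inv_mk, ← map_inv] at h
    exact h

def generatorPairs : Set (GL (Fin 6) ℤ × Equiv.Perm (Fin 4)) :=
  {(MX, Equiv.swap 0 1), (MY, Equiv.swap 0 2), (MZ, Equiv.swap 0 3)}

theorem mk_mem_closure_generatorPairs (π : G →* Equiv.Perm (Fin 4))
    (hX : π ⟨MX, hMX⟩ = Equiv.swap 0 1) (hY : π ⟨MY, hMY⟩ = Equiv.swap 0 2)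
    (hZ : π ⟨MZ, hMZ⟩ = Equiv.swap 0 3) (g : G) :
    ((g : GL (Fin 6) ℤ), π g) ∈ Subgroup.closure generatorPairs := by
  refine Subgroup.closure_mono ?_ (Subgroup.mk_mem_closure_graph π g)
  rintro _ ⟨⟨s, rfl | rfl | rfl⟩, rfl⟩
  · exact Or.inl (congrArg _ hX)
  · exact Or.inr (Or.inl (congrArg _ hY))
  · exact Or.inr (Or.inr (congrArg _ hZ))

theorem inv_eq_self_of_mem_generatorPairs {z : GL (Fin 6) ℤ × Equiv.Perm (Fin 4)}
    (hz : z ∈ generatorPairs) : z⁻¹ = z := by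
  rcases hz with rfl | rfl | rfl <;> exact Prod.ext (Units.ext rfl) (Equiv.swap_inv _ _)

theorem exists_realizes_of_mem_generatorPairs {z : GL (Fin 6) ℤ × Equiv.Perm (Fin 4)}
    (hz : z ∈ generatorPairs) :
    ∃ g ∈ [tabX, tabY, tabZ], Realizes (z.1 : Matrix (Fin 6) (Fin 6) ℤ) z.2 g := by
  rcases hz with rfl | rfl | rfl
  exacts [⟨tabX, by simp, realizes_MX⟩, ⟨tabY, by simp, realizes_MY⟩, ⟨tabZ, by simp, realizes_MZ⟩]

theorem exists_mem_groupTables_realizes_mul {x y : GL (Fin 6) ℤ × Equiv.Perm (Fin 4)}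
    (hx : x ∈ generatorPairs)
    (hy : ∃ t ∈ groupTables, Realizes (y.1 : Matrix (Fin 6) (Fin 6) ℤ) y.2 t) :
    ∃ t ∈ groupTables, Realizes ((x * y).1 : Matrix (Fin 6) (Fin 6) ℤ) (x * y).2 t := by
  obtain ⟨g, hg, hxg⟩ := exists_realizes_of_mem_generatorPairs hx
  obtain ⟨t, ht, hyt⟩ := hy
  exact ⟨comp g t, comp_mem_groupTables g hg t ht, hxg.mul hyt⟩

theorem exists_mem_groupTables_realizes {z : GL (Fin 6) ℤ × Equiv.Perm (Fin 4)}
    (hz : z ∈ Subgroup.closure generatorPairs) :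
    ∃ t ∈ groupTables, Realizes (z.1 : Matrix (Fin 6) (Fin 6) ℤ) z.2 t := by
  induction hz using Subgroup.closure_induction_left with
  | one => exact ⟨List.range 16, by decide +kernel, Realizes.one 16⟩
  | mul_left x hx y _ ih => exact exists_mem_groupTables_realizes_mul hx ih
  | inv_mul_cancel x hx y _ ih =>
    rw [inv_eq_self_of_mem_generatorPairs hx]
    exact exists_mem_groupTables_realizes_mul hx ih

theorem pow_four_ne_one_of_realizes_finRotate {x : Matrix (Fin 6) (Fin 6) ℤ} {t : List ℕ}
    (ht : t ∈ groupTables) (hx : Realizes x (finRotate 4) t) : x ^ 4 ≠ 1 := by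
  have hlift : ∀ t ∈ groupTables, (∀ a : Fin 4, apply t (2 * 6 + a) = 2 * 6 + finRotate 4 a) →
      apply t (apply t (apply t (apply t 0))) = 1 := by
    decide +kernel
  intro h4
  have h := congrArg (· *ᵥ signedBasis 6 0) h4
  simp only [pow_succ, pow_zero, one_mul, ← mulVec_mulVec, hx.1, one_mulVec, hlift t ht hx.2] at h
  exact absurd (congrFun h 0) (by decide)

/-- The extension `1 → K₄ → G → S₄ → 1` is not split: there is no group homomorphism
`s : S₄ → G` with `π ∘ s = id`. -/
theorem stmt_9 (π : G →* Equiv.Perm (Fin 4))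
    (hX : π ⟨MX, hMX⟩ = Equiv.swap 0 1) (hY : π ⟨MY, hMY⟩ = Equiv.swap 0 2)
    (hZ : π ⟨MZ, hMZ⟩ = Equiv.swap 0 3) :
    ¬ ∃ s : Equiv.Perm (Fin 4) →* G, π.comp s = MonoidHom.id (Equiv.Perm (Fin 4)) := by
  rintro ⟨s, hs⟩
  set x := s (finRotate 4)
  have hπx : π x = finRotate 4 := DFunLike.congr_fun hs _
  obtain ⟨t, ht, hxt⟩ :=
    exists_mem_groupTables_realizes (mk_mem_closure_generatorPairs π hX hY hZ x)
  rw [hπx] at hxt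
  refine pow_four_ne_one_of_realizes_finRotate ht hxt ?_
  have hx4 : x ^ 4 = 1 := by
    rw [← map_pow, show finRotate 4 ^ 4 = 1 by decide, map_one]
  simpa using congrArg (fun g : G => ((g : GL (Fin 6) ℤ) : Matrix (Fin 6) (Fin 6) ℤ)) hx4
end

section
/- The elements a := (M_Z M_X M_Y)², b := (M_X M_Y M_Z)², c := (M_Y M_Z M_X)² of G each have order 4, commute pairwise, and satisfy a·b·c = 1; the subgroup H of G generated by a and b is normal in G, has order 16, and is isomorphic to ℤ/4 × ℤ/4. -/
/-! Conjugation by `M_X`, `M_Y`, `M_Z` permutes `{a, b, c}` (`X` fixes `a` and swaps `b, c`;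
`Y` fixes `b` and swaps `a, c`; `Z` swaps `a, b`), and `c = (ab)⁻¹`, so `G` normalises
`⟨a, b⟩ = ⟨a, b, c⟩`. Since `a` and `b` commute, have order 4 and `⟨a⟩ ∩ ⟨b⟩ = 1`, multiplication
`⟨a⟩ × ⟨b⟩ → ⟨a, b⟩` is an isomorphism, so `⟨a, b⟩ ≅ ℤ/4 × ℤ/4`. Everything else is a finite
matrix computation. -/

open Matrix

def a : GL (Fin 6) ℤ := (MZ * MX * MY) ^ 2
def b : GL (Fin 6) ℤ := (MX * MY * MZ) ^ 2
def c : GL (Fin 6) ℤ := (MY * MZ * MX) ^ 2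

open Subgroup

section General

variable {Γ : Type*} [Group Γ]

lemma orderOf_eq_four {x : Γ} (h2 : x ^ 2 ≠ 1) (h4 : x ^ 4 = 1) : orderOf x = 4 :=
  orderOf_eq_prime_pow (p := 2) (n := 1) h2 h4

lemma mem_normalizer_of_conj_mem {s : Set Γ} {g : Γ} (hg : g * g = 1)
    (hs : ∀ x ∈ s, g * x * g⁻¹ ∈ s) : g ∈ normalizer s := by
  have hg_inv : g⁻¹ = g := inv_eq_of_mul_eq_one_right hg
  refine mem_set_normalizer_iff.2 fun x => ⟨hs x, fun hx => ?_⟩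
  have hconj : g * (g * x * g⁻¹) * g⁻¹ = x := by
    rw [hg_inv, ← mul_assoc, ← mul_assoc, hg, one_mul, mul_assoc, hg, mul_one]
  simpa only [hconj] using hs _ hx

noncomputable def zmodOrderOfHom (x : Γ) : Multiplicative (ZMod (orderOf x)) →* Γ :=
  (zpowers x).subtype.comp
    (zmodMulEquivOfGenerator (g := ⟨x, mem_zpowers x⟩)
      (by rintro ⟨_, k, rfl⟩; exact ⟨k, Subtype.ext (by simp)⟩) (Nat.card_zpowers x)).toMonoidHom

lemma zmodOrderOfHom_injective (x : Γ) : Function.Injective (zmodOrderOfHom x) :=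
  Subtype.val_injective.comp (MulEquiv.injective _)

lemma range_zmodOrderOfHom (x : Γ) : (zmodOrderOfHom x).range = zpowers x := by
  rw [zmodOrderOfHom, MonoidHom.range_comp,
    MonoidHom.range_eq_top_of_surjective _ (MulEquiv.surjective _), ← MonoidHom.range_eq_map,
    range_subtype]

lemma disjoint_zpowers_of_forall_pow_eq_pow {x y : Γ} (hx : IsOfFinOrder x) (hy : IsOfFinOrder y)
    (h : ∀ i < orderOf x, ∀ j < orderOf y, x ^ i = y ^ j → x ^ i = 1) :
    Disjoint (zpowers x) (zpowers y) := by
  classical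
  refine disjoint_def.2 fun {z} hzx hzy => ?_
  obtain ⟨i, hi, rfl⟩ := Finset.mem_image.1 (hx.mem_zpowers_iff_mem_range_orderOf.1 hzx)
  obtain ⟨j, hj, hyj⟩ := Finset.mem_image.1 (hy.mem_zpowers_iff_mem_range_orderOf.1 hzy)
  exact h i (Finset.mem_range.1 hi) j (Finset.mem_range.1 hj) hyj.symm

theorem Commute.nonempty_closure_pair_mulEquiv {x y : Γ} (hxy : Commute x y)
    (hdisj : Disjoint (zpowers x) (zpowers y)) :
    Nonempty (Subgroup.closure {x, y} ≃*
      Multiplicative (ZMod (orderOf x)) × Multiplicative (ZMod (orderOf y))) := by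
  have comm : ∀ m n, Commute (zmodOrderOfHom x m) (zmodOrderOfHom y n) := by
    intro m n
    obtain ⟨i, hi⟩ := (range_zmodOrderOfHom x).le ⟨m, rfl⟩
    obtain ⟨j, hj⟩ := (range_zmodOrderOfHom y).le ⟨n, rfl⟩
    simpa only [← hi, ← hj] using hxy.zpow_zpow i j
  have hinj : Function.Injective ((zmodOrderOfHom x).noncommCoprod (zmodOrderOfHom y) comm) :=
    (MonoidHom.noncommCoprod_injective _ _ comm).2
      ⟨zmodOrderOfHom_injective x, zmodOrderOfHom_injective y, by
        rwa [range_zmodOrderOfHom, range_zmodOrderOfHom]⟩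
  have hrange : ((zmodOrderOfHom x).noncommCoprod (zmodOrderOfHom y) comm).range =
      Subgroup.closure {x, y} := by
    rw [MonoidHom.noncommCoprod_range, range_zmodOrderOfHom, range_zmodOrderOfHom,
      zpowers_eq_closure, zpowers_eq_closure, ← Subgroup.closure_union, Set.singleton_union]
  exact ⟨((MonoidHom.ofInjective hinj).trans (MulEquiv.subgroupCongr hrange)).symm⟩

end General

lemma a_mul_b_mul_c : a * b * c = 1 := by decide

lemma commute_a_b : Commute a b := (by decide : a * b = b * a)

lemma c_mem_closure_ab : c ∈ Subgroup.closure {a, b} := by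
  rw [eq_inv_of_mul_eq_one_right a_mul_b_mul_c]
  exact inv_mem (mul_mem (subset_closure (by simp)) (subset_closure (by simp)))

lemma closure_abc_eq_closure_ab : Subgroup.closure {a, b, c} = Subgroup.closure {a, b} := by
  refine le_antisymm ((closure_le _).2 ?_) (closure_mono ?_)
  · rintro x (rfl | rfl | rfl)
    exacts [subset_closure (by simp), subset_closure (by simp), c_mem_closure_ab]
  · exact Set.insert_subset_insert (Set.singleton_subset_iff.2 (Set.mem_insert b _))

lemma conj_MX : MX * a * MX⁻¹ = a ∧ MX * b * MX⁻¹ = c ∧ MX * c * MX⁻¹ = b := by decide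
lemma conj_MY : MY * a * MY⁻¹ = c ∧ MY * b * MY⁻¹ = b ∧ MY * c * MY⁻¹ = a := by decide
lemma conj_MZ : MZ * a * MZ⁻¹ = b ∧ MZ * b * MZ⁻¹ = a ∧ MZ * c * MZ⁻¹ = c := by decide

lemma G_le_normalizer : G ≤ normalizer (Subgroup.closure {a, b} : Set (GL (Fin 6) ℤ)) := by
  rw [← closure_abc_eq_closure_ab]
  refine ((closure_le _).2 ?_).trans (normalizer_le_normalizer_closure _)
  rintro g (rfl | rfl | rfl)
  · exact mem_normalizer_of_conj_mem (by decide) (by rintro x (rfl | rfl | rfl) <;> simp [conj_MX])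
  · exact mem_normalizer_of_conj_mem (by decide) (by rintro x (rfl | rfl | rfl) <;> simp [conj_MY])
  · exact mem_normalizer_of_conj_mem (by decide) (by rintro x (rfl | rfl | rfl) <;> simp [conj_MZ])

lemma closure_ab_le_G : Subgroup.closure {a, b} ≤ G := by
  rw [closure_le]
  rintro x (rfl | rfl)
  · exact G.pow_mem (G.mul_mem (G.mul_mem hMZ hMX) hMY) 2
  · exact G.pow_mem (G.mul_mem (G.mul_mem hMX hMY) hMZ) 2

/-- The elements `a = (M_Z M_X M_Y)²`, `b = (M_X M_Y M_Z)²`, `c = (M_Y M_Z M_X)²` each have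
order 4, commute pairwise, and satisfy `a·b·c = 1`; the subgroup `H` generated by `a` and `b`
is normal in `G`, has order 16, and is isomorphic to `ℤ/4 × ℤ/4`. -/
theorem stmt_10 :
    orderOf a = 4 ∧ orderOf b = 4 ∧ orderOf c = 4 ∧
    Commute a b ∧ Commute a c ∧ Commute b c ∧
    a * b * c = 1 ∧
    ((Subgroup.closure {a, b}).subgroupOf G).Normal ∧
    Nat.card (Subgroup.closure {a, b} : Subgroup (GL (Fin 6) ℤ)) = 16 ∧
    Nonempty ((Subgroup.closure {a, b} : Subgroup (GL (Fin 6) ℤ)) ≃* (Multiplicative (ZMod 4) × Multiplicative (ZMod 4))) := by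
  have ha : orderOf a = 4 := orderOf_eq_four (by decide) (by decide)
  have hb : orderOf b = 4 := orderOf_eq_four (by decide) (by decide)
  have hdisj : Disjoint (zpowers a) (zpowers b) :=
    disjoint_zpowers_of_forall_pow_eq_pow (orderOf_pos_iff.1 (by omega))
      (orderOf_pos_iff.1 (by omega)) (by rw [ha, hb]; decide)
  have hiso := commute_a_b.nonempty_closure_pair_mulEquiv hdisj
  rw [ha, hb] at hiso
  refine ⟨ha, hb, orderOf_eq_four (by decide) (by decide), commute_a_b,
    (by decide : a * c = c * a), (by decide : b * c = c * b), a_mul_b_mul_c,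
    (normal_subgroupOf_iff_le_normalizer closure_ab_le_G).2 G_le_normalizer, ?_, hiso⟩
  obtain ⟨e⟩ := hiso
  simp [Nat.card_congr e.toEquiv, Nat.card_eq_fintype_card]
end

section
/- The preimage under π of the Klein four subgroup V = {1, (0 1)(2 3), (0 2)(1 3), (0 3)(1 2)} of Perm({0,1,2,3}) equals the subgroup H of G generated by a := (M_Z M_X M_Y)² and b := (M_X M_Y M_Z)²; in particular this preimage has order 16. -/
open Matrix

/-! The subgroup `H = ⟨a, b⟩` is a copy of `ℤ/4 × ℤ/4` (`a`, `b` commute and have order 4), and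
letting `M_X, M_Y, M_Z` act on right cosets of `H` (a Todd–Coxeter enumeration) shows that
`1, M_X, M_Y, M_Z, M_X M_Y, M_X M_Z` represent all of them, so `[G : H] ≤ 6`. Now `π a` and `π b`
lie in `V`, whereas the images of the five nontrivial representatives do not; hence an element
`h · t` of `G` is mapped into `V` exactly when `t = 1`, i.e. `π⁻¹(V) = H`. -/

section

open scoped Pointwise

variable {M : Type*} [Group M]

theorem Subgroup.mul_mem_coe_mul {K : Subgroup M} {T : Set M} {k x : M} (hk : k ∈ K)
    (hx : x ∈ (K : Set M) * T) : k * x ∈ (K : Set M) * T := by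
  rw [← coe_mul_coe K, mul_assoc]
  exact Set.mul_mem_mul hk hx

theorem Subgroup.closure_subset_mul_of_mul_mem {S T : Set M} {K : Subgroup M} (h1 : (1 : M) ∈ T)
    (hmul : ∀ t ∈ T, ∀ s ∈ S, t * s ∈ (K : Set M) * T)
    (hmul_inv : ∀ t ∈ T, ∀ s ∈ S, t * s⁻¹ ∈ (K : Set M) * T) :
    (Subgroup.closure S : Set M) ⊆ (K : Set M) * T := by
  intro x hx
  induction hx using Subgroup.closure_induction_right with
  | one => exact ⟨1, K.one_mem, 1, h1, one_mul 1⟩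
  | mul_right x _ s hs ih =>
    obtain ⟨k, hk, t, ht, rfl⟩ := ih
    rw [mul_assoc]
    exact Subgroup.mul_mem_coe_mul hk (hmul t ht s hs)
  | mul_inv_cancel x _ s hs ih =>
    obtain ⟨k, hk, t, ht, rfl⟩ := ih
    rw [mul_assoc]
    exact Subgroup.mul_mem_coe_mul hk (hmul_inv t ht s hs)

theorem Commute.mem_closure_pair_iff_of_pow_eq_one {a b : M} (hab : Commute a b) {n : ℕ}
    [NeZero n] (ha : a ^ n = 1) (hb : b ^ n = 1) {x : M} :
    x ∈ Subgroup.closure {a, b} ↔ ∃ i j : Fin n, a ^ (i : ℕ) * b ^ (j : ℕ) = x := by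
  have pow_mul_pow (i j k l : ℕ) :
      a ^ i * b ^ j * (a ^ k * b ^ l) = a ^ (i + k) * b ^ (j + l) := by
    rw [mul_assoc, ← mul_assoc (b ^ j), ((hab.symm).pow_pow j k).eq, pow_add, pow_add]
    simp only [mul_assoc]
  constructor
  · intro hx
    suffices ∃ i j : ℕ, a ^ i * b ^ j = x by
      obtain ⟨i, j, rfl⟩ := this
      exact ⟨⟨i % n, Nat.mod_lt i n.pos_of_neZero⟩, ⟨j % n, Nat.mod_lt j n.pos_of_neZero⟩,
        by rw [← pow_eq_pow_mod i ha, ← pow_eq_pow_mod j hb]⟩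
    induction hx using Subgroup.closure_induction with
    | mem y hy =>
      rcases hy with rfl | rfl
      · exact ⟨1, 0, by simp⟩
      · exact ⟨0, 1, by simp⟩
    | one => exact ⟨0, 0, by simp⟩
    | mul y z _ _ ihy ihz =>
      obtain ⟨i, j, rfl⟩ := ihy
      obtain ⟨k, l, rfl⟩ := ihz
      exact ⟨i + k, j + l, (pow_mul_pow i j k l).symm⟩
    | inv y _ ihy =>
      obtain ⟨i, j, rfl⟩ := ihy
      -- `a ^ (n - 1)` inverts `a`
      refine ⟨(n - 1) * i, (n - 1) * j, inv_eq_of_mul_eq_one_right ?_ |>.symm⟩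
      rw [pow_mul_pow, ← one_add_mul, ← one_add_mul, Nat.add_sub_cancel' NeZero.one_le,
        pow_mul, pow_mul, ha, hb, one_pow, one_pow, one_mul]
  · rintro ⟨i, j, rfl⟩
    exact mul_mem (pow_mem (Subgroup.subset_closure (by simp)) _)
      (pow_mem (Subgroup.subset_closure (by simp)) _)

end

namespace DF3

def H : Subgroup (GL (Fin 6) ℤ) := Subgroup.closure {a, b}

theorem commute_a_b : Commute a b := by
  change a * b = b * a
  decide

theorem a_pow_four : a ^ 4 = 1 := by decide

theorem b_pow_four : b ^ 4 = 1 := by decide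

theorem mem_H_iff {x : GL (Fin 6) ℤ} : x ∈ H ↔ ∃ i j : Fin 4, a ^ (i : ℕ) * b ^ (j : ℕ) = x :=
  commute_a_b.mem_closure_pair_iff_of_pow_eq_one a_pow_four b_pow_four

theorem card_H : Nat.card H = 16 := by
  let f : Fin 4 × Fin 4 → H := fun p =>
    ⟨a ^ (p.1 : ℕ) * b ^ (p.2 : ℕ), mem_H_iff.2 ⟨_, _, rfl⟩⟩
  have hf : Function.Bijective f := by
    refine ⟨fun p q hpq => ?_, fun x => ?_⟩
    · have hinj : ∀ p q : Fin 4 × Fin 4,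
          a ^ (p.1 : ℕ) * b ^ (p.2 : ℕ) = a ^ (q.1 : ℕ) * b ^ (q.2 : ℕ) → p = q := by
        decide
      exact hinj p q (congrArg Subtype.val hpq)
    · obtain ⟨i, j, hx⟩ := mem_H_iff.1 x.2
      exact ⟨(i, j), Subtype.ext hx⟩
  rw [← Nat.card_eq_of_bijective f hf, Nat.card_prod, Nat.card_fin]

theorem H_le_G : H ≤ G := by
  rw [H, Subgroup.closure_le]
  rintro x (rfl | rfl)
  · exact G.pow_mem (G.mul_mem (G.mul_mem hMZ hMX) hMY) 2
  · exact G.pow_mem (G.mul_mem (G.mul_mem hMX hMY) hMZ) 2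

def X : G := ⟨MX, hMX⟩

def Y : G := ⟨MY, hMY⟩

def Z : G := ⟨MZ, hMZ⟩

def rep : Fin 6 → G := ![1, X, Y, Z, X * Y, X * Z]

theorem rep_mul_eq : ∀ k, ∀ s ∈ [MX, MY, MZ], ∃ k' : Fin 6, ∃ i j : Fin 4,
    (rep k : GL (Fin 6) ℤ) * s = a ^ (i : ℕ) * b ^ (j : ℕ) * rep k' := by
  decide

open scoped Pointwise in
theorem G_subset_H_mul_rep :
    (G : Set (GL (Fin 6) ℤ)) ⊆ (H : Set _) * Set.range (fun k => (rep k : GL (Fin 6) ℤ)) := by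
  have hinv : ∀ s ∈ ({MX, MY, MZ} : Set (GL (Fin 6) ℤ)), s⁻¹ = s := by
    rintro s (rfl | rfl | rfl) <;> exact Units.ext rfl
  have hmul : ∀ t ∈ Set.range (fun k => (rep k : GL (Fin 6) ℤ)),
      ∀ s ∈ ({MX, MY, MZ} : Set _),
        t * s ∈ (H : Set _) * Set.range (fun k => (rep k : GL (Fin 6) ℤ)) := by
    rintro - ⟨k, rfl⟩ s hs
    obtain ⟨k', i, j, he⟩ := rep_mul_eq k s (by simpa using hs)
    exact ⟨_, mem_H_iff.2 ⟨i, j, rfl⟩, _, ⟨k', rfl⟩, he.symm⟩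
  refine Subgroup.closure_subset_mul_of_mul_mem ⟨0, rfl⟩ hmul fun t ht s hs => ?_
  rw [hinv s hs]
  exact hmul t ht s hs

def kleinFour : Subgroup (Equiv.Perm (Fin 4)) where
  carrier := {1, Equiv.swap 0 1 * Equiv.swap 2 3, Equiv.swap 0 2 * Equiv.swap 1 3,
    Equiv.swap 0 3 * Equiv.swap 1 2}
  mul_mem' := by
    rintro _ _ (rfl | rfl | rfl | rfl) (rfl | rfl | rfl | rfl) <;> decide
  one_mem' := Set.mem_insert 1 _
  inv_mem' := by
    rintro _ (rfl | rfl | rfl | rfl) <;> decide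

theorem mem_kleinFour {σ : Equiv.Perm (Fin 4)} : σ ∈ kleinFour ↔ σ = 1 ∨
    σ = Equiv.swap 0 1 * Equiv.swap 2 3 ∨ σ = Equiv.swap 0 2 * Equiv.swap 1 3 ∨
    σ = Equiv.swap 0 3 * Equiv.swap 1 2 :=
  Iff.rfl

section Pi

variable (π : G →* Equiv.Perm (Fin 4)) (hX : π X = Equiv.swap 0 1) (hY : π Y = Equiv.swap 0 2)
  (hZ : π Z = Equiv.swap 0 3)

include hX hY hZ

theorem H_le_map_comap_kleinFour : H ≤ (kleinFour.comap π).map G.subtype := by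
  rw [H, Subgroup.closure_le]
  rintro x (rfl | rfl)
  · refine ⟨(Z * X * Y) ^ 2, show π _ ∈ kleinFour from ?_, rfl⟩
    rw [map_pow, map_mul, map_mul, hX, hY, hZ, mem_kleinFour]
    decide
  · refine ⟨(X * Y * Z) ^ 2, show π _ ∈ kleinFour from ?_, rfl⟩
    rw [map_pow, map_mul, map_mul, hX, hY, hZ, mem_kleinFour]
    decide

theorem map_rep_mem_kleinFour_iff (k : Fin 6) : π (rep k) ∈ kleinFour ↔ k = 0 := by
  fin_cases k <;>
    simp only [rep, Fin.reduceFinMk, Fin.zero_eta, Fin.mk_one, Matrix.cons_val, map_one, map_mul,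
      hX, hY, hZ, mem_kleinFour] <;> decide

theorem comap_kleinFour : kleinFour.comap π = H.subgroupOf G := by
  refine le_antisymm (fun x hx => ?_) fun x hx => ?_
  · obtain ⟨h₀, hh, -, ⟨k, rfl⟩, hxe⟩ := G_subset_H_mul_rep x.2
    obtain ⟨h, hh', rfl⟩ := H_le_map_comap_kleinFour π hX hY hZ hh
    obtain rfl : x = h * rep k := Subtype.ext hxe.symm
    rw [Subgroup.mem_comap, map_mul, kleinFour.mul_mem_cancel_left hh',
      map_rep_mem_kleinFour_iff π hX hY hZ] at hx
    subst hx
    simpa [rep, Subgroup.mem_subgroupOf] using hh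
  · obtain ⟨y, hy, hyx⟩ := H_le_map_comap_kleinFour π hX hY hZ hx
    rwa [Subtype.ext hyx] at hy

end Pi

end DF3

open DF3 in
/-- The preimage under `π` of the Klein four subgroup
`V = {1, (0 1)(2 3), (0 2)(1 3), (0 3)(1 2)}` of `S₄` equals the subgroup of `G` generated by
`a = (M_Z M_X M_Y)²` and `b = (M_X M_Y M_Z)²`; in particular this preimage has order 16. -/
theorem stmt_13 (π : G →* Equiv.Perm (Fin 4))
    (hX : π ⟨MX, hMX⟩ = Equiv.swap 0 1) (hY : π ⟨MY, hMY⟩ = Equiv.swap 0 2)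
    (hZ : π ⟨MZ, hMZ⟩ = Equiv.swap 0 3) :
    (⇑π ⁻¹' {1, Equiv.swap 0 1 * Equiv.swap 2 3, Equiv.swap 0 2 * Equiv.swap 1 3,
        Equiv.swap 0 3 * Equiv.swap 1 2} : Set G)
      = (((Subgroup.closure {a, b}).subgroupOf G : Subgroup G) : Set G) ∧
    Nat.card (⇑π ⁻¹' {1, Equiv.swap 0 1 * Equiv.swap 2 3, Equiv.swap 0 2 * Equiv.swap 1 3,
        Equiv.swap 0 3 * Equiv.swap 1 2} : Set G) = 16 := by
  have hpre : (⇑π ⁻¹' {1, Equiv.swap 0 1 * Equiv.swap 2 3, Equiv.swap 0 2 * Equiv.swap 1 3,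
      Equiv.swap 0 3 * Equiv.swap 1 2} : Set G) = (H.subgroupOf G : Set G) :=
    congrArg SetLike.coe (comap_kleinFour π hX hY hZ)
  refine ⟨hpre, ?_⟩
  rw [hpre, SetLike.coe_sort_coe, Nat.card_congr (Subgroup.subgroupOfEquivOfLe H_le_G).toEquiv,
    card_H]
end

section
/- The group G contains exactly 1 element of order 1, exactly 15 elements of order 2, exactly 32 elements of order 3, exactly 24 elements of order 4, and exactly 24 elements of order 8 (and no elements of any other order). -/
open Matrix

/-! The generators are signed permutation matrices and involutions, so `G` is the submonoid they
generate, and it is isomorphic to the submonoid generated by three elements of the monoid of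
row-monomial matrices `⟨σ, c⟩` (`σ : Fin 6 → Fin 6`, `c : Fin 6 → ℤˣ`), in which products can be
evaluated cheaply. The words of length at most 8 in `1, M_X, M_Y, M_Z` already form a set closed
under multiplication by the generators, so they exhaust the group (96 elements), and the order
statistics are read off this finite set by evaluation. -/

open scoped Pointwise

/-- `⟨σ, c⟩` stands for the matrix whose row `i` has the single entry `c i`, in column `σ i`. -/
@[ext]
structure RowMonomial (n M : Type*) where
  col : n → n
  coeff : n → M

namespace RowMonomial

variable {n M : Type*}

instance [Monoid M] : Monoid (RowMonomial n M) where
  mul a b := ⟨b.col ∘ a.col, fun i => a.coeff i * b.coeff (a.col i)⟩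
  one := ⟨id, 1⟩
  mul_assoc _ _ _ := RowMonomial.ext rfl (funext fun _ => mul_assoc _ _ _)
  one_mul _ := RowMonomial.ext rfl (funext fun _ => one_mul _)
  mul_one _ := RowMonomial.ext rfl (funext fun _ => mul_one _)

@[simp]
theorem mul_col [Monoid M] (a b : RowMonomial n M) : (a * b).col = b.col ∘ a.col := rfl

@[simp]
theorem mul_coeff [Monoid M] (a b : RowMonomial n M) (i : n) :
    (a * b).coeff i = a.coeff i * b.coeff (a.col i) := rfl

@[simp]
theorem one_col [Monoid M] : (1 : RowMonomial n M).col = id := rfl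

@[simp]
theorem one_coeff [Monoid M] : (1 : RowMonomial n M).coeff = 1 := rfl

instance [Fintype n] [DecidableEq n] [DecidableEq M] : DecidableEq (RowMonomial n M) :=
  fun a b => decidable_of_iff (a.col = b.col ∧ a.coeff = b.coeff) RowMonomial.ext_iff.symm

variable [Fintype n] [DecidableEq n] {R : Type*} [Semiring R]

def toMatrix : RowMonomial n Rˣ →* Matrix n n R where
  toFun a := Matrix.of fun i j => if a.col i = j then (a.coeff i : R) else 0
  map_one' := by
    ext i j
    simp [Matrix.one_apply]
  map_mul' a b := by
    ext i j
    rw [Matrix.mul_apply, Finset.sum_eq_single (a.col i)]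
    · by_cases h : b.col (a.col i) = j <;> simp [h]
    · intro k _ hk
      simp [Ne.symm hk]
    · simp

@[simp]
theorem toMatrix_apply (a : RowMonomial n Rˣ) (i j : n) :
    toMatrix a i j = if a.col i = j then (a.coeff i : R) else 0 := rfl

theorem toMatrix_injective [Nontrivial R] :
    Function.Injective (toMatrix : RowMonomial n Rˣ →* Matrix n n R) := by
  intro a b h
  have key : ∀ i, b.col i = a.col i ∧ b.coeff i = a.coeff i := by
    intro i
    have hi := congrFun (congrFun h i) (a.col i)
    simp only [toMatrix_apply, if_true] at hi
    split_ifs at hi with hb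
    · exact ⟨hb, Units.ext hi.symm⟩
    · exact absurd hi (a.coeff i).ne_zero
  exact RowMonomial.ext (funext fun i => (key i).1.symm) (funext fun i => (key i).2.symm)

end RowMonomial

namespace Submonoid

variable {M N P : Type*} [Monoid M] [Monoid N] [Monoid P]

theorem coe_closure_eq_pow {s : Set M} (hs : 1 ∈ s) {n : ℕ} (h : s ^ (n + 1) ⊆ s ^ n) :
    (closure s : Set M) = s ^ n := by
  refine subset_antisymm (fun x hx => ?_) (pow_subset subset_closure)
  induction hx using closure_induction_right with
  | one => exact Set.one_mem_pow hs
  | mul_right x _ y hy ih => exact h (pow_succ s n ▸ Set.mul_mem_mul ih hy)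

noncomputable def closureEquivOfImageEq {f : M →* P} {g : N →* P} (hf : Function.Injective f)
    (hg : Function.Injective g) {s : Set M} {t : Set N} (h : f '' s = g '' t) :
    closure s ≃* closure t :=
  ((closure s).equivMapOfInjective f hf).trans <|
    (MulEquiv.submonoidCongr (by rw [MonoidHom.map_mclosure, h, ← MonoidHom.map_mclosure])).trans
      ((closure t).equivMapOfInjective g hg).symm

end Submonoid

theorem MulEquiv.card_orderOf_eq {M N : Type*} [Monoid M] [Monoid N] (e : M ≃* N) (k : ℕ) :
    Nat.card {a : M // orderOf a = k} = Nat.card {b : N // orderOf b = k} :=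
  Nat.card_congr (e.toEquiv.subtypeEquiv fun a => by rw [← e.orderOf_eq]; rfl)

theorem Subgroup.closure_toSubmonoid_of_inv_subset {G : Type*} [Group G] {s : Set G}
    (hs : s⁻¹ ⊆ s) : (closure s).toSubmonoid = Submonoid.closure s := by
  rw [closure_toSubmonoid, Set.union_eq_left.2 hs]

section HasOrder

variable {M : Type*} [Monoid M]

def HasOrder (k : ℕ) (a : M) : Prop :=
  0 < k ∧ a ^ k = 1 ∧ ∀ m < k, 0 < m → a ^ m ≠ 1

instance [DecidableEq M] (k : ℕ) : DecidablePred (HasOrder (M := M) k) :=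
  fun _ => inferInstanceAs (Decidable (_ ∧ _))

theorem hasOrder_iff {k : ℕ} {a : M} : HasOrder k a ↔ 0 < k ∧ orderOf a = k :=
  ⟨fun ⟨hk, h⟩ => ⟨hk, (orderOf_eq_iff hk).2 h⟩, fun ⟨hk, h⟩ => ⟨hk, (orderOf_eq_iff hk).1 h⟩⟩

namespace Submonoid

variable {S : Submonoid M} {T : Finset M}

theorem card_orderOf_eq_card_filter [DecidableEq M] (hST : (S : Set M) = T) {k : ℕ}
    (hk : 0 < k) :
    Nat.card {a : S // orderOf a = k} = (T.filter (HasOrder k)).card := by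
  rw [← Nat.card_eq_finsetCard]
  refine Nat.card_congr <| (Equiv.subtypeEquivRight fun a => ?_).trans <|
    (Equiv.subtypeSubtypeEquivSubtypeInter (· ∈ S) (HasOrder k)).trans <|
      Equiv.subtypeEquivRight fun a => ?_
  · rw [hasOrder_iff, orderOf_submonoid, and_iff_right hk]
  · rw [Finset.mem_filter, ← Finset.mem_coe, ← hST, SetLike.mem_coe]

theorem orderOf_mem_of_forall_hasOrder (hST : (S : Set M) = T) {K : Finset ℕ}
    (hK : ∀ a ∈ T, ∃ k ∈ K, HasOrder k a) (a : S) : orderOf a ∈ K := by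
  obtain ⟨k, hkK, hk⟩ := hK a (by rw [← Finset.mem_coe, ← hST]; exact a.2)
  rwa [← orderOf_submonoid, (hasOrder_iff.1 hk).2]

end Submonoid

end HasOrder

def monX : RowMonomial (Fin 6) ℤˣ := ⟨![4, 5, 2, 3, 0, 1], ![-1, -1, 1, -1, -1, -1]⟩
def monY : RowMonomial (Fin 6) ℤˣ := ⟨![3, 1, 5, 0, 4, 2], ![-1, 1, -1, -1, -1, -1]⟩
def monZ : RowMonomial (Fin 6) ℤˣ := ⟨![0, 3, 4, 1, 2, 5], ![1, -1, -1, -1, -1, -1]⟩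

def monGens : Finset (RowMonomial (Fin 6) ℤˣ) := {1, monX, monY, monZ}

theorem image_monGens :
    RowMonomial.toMatrix '' (monGens : Set (RowMonomial (Fin 6) ℤˣ)) =
      Units.coeHom _ '' {1, MX, MY, MZ} := by
  have hX : RowMonomial.toMatrix monX = MXmat := by decide
  have hY : RowMonomial.toMatrix monY = MYmat := by decide
  have hZ : RowMonomial.toMatrix monZ = MZmat := by decide
  simp only [monGens, Finset.coe_insert, Finset.coe_singleton, Set.image_insert_eq,
    Set.image_singleton, map_one, hX, hY, hZ]
  rfl

theorem G_toSubmonoid_eq_closure : G.toSubmonoid = Submonoid.closure {1, MX, MY, MZ} := by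
  have inv_gens : ({MX, MY, MZ} : Set (GL (Fin 6) ℤ))⁻¹ ⊆ {MX, MY, MZ} := by
    rw [Set.inv_insert, Set.inv_insert, Set.inv_singleton]
    rfl
  rw [Submonoid.closure_insert_one]
  exact Subgroup.closure_toSubmonoid_of_inv_subset inv_gens

noncomputable def equivClosureMonGens :
    G ≃* Submonoid.closure (monGens : Set (RowMonomial (Fin 6) ℤˣ)) :=
  (MulEquiv.submonoidCongr G_toSubmonoid_eq_closure).trans <|
    Submonoid.closureEquivOfImageEq Units.val_injective RowMonomial.toMatrix_injective
      image_monGens.symm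

theorem monGens_pow_nine_subset : monGens ^ 9 ⊆ monGens ^ 8 := by
  decide +kernel

theorem coe_closure_monGens :
    (Submonoid.closure (monGens : Set (RowMonomial (Fin 6) ℤˣ)) : Set (RowMonomial (Fin 6) ℤˣ)) =
      SetLike.coe (monGens ^ 8) := by
  rw [Finset.coe_pow]
  exact Submonoid.coe_closure_eq_pow (by simp [monGens])
    (by exact_mod_cast monGens_pow_nine_subset)

theorem card_filter_hasOrder_monGens_pow_eight :
    ((monGens ^ 8).filter (HasOrder 1)).card = 1 ∧
    ((monGens ^ 8).filter (HasOrder 2)).card = 15 ∧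
    ((monGens ^ 8).filter (HasOrder 3)).card = 32 ∧
    ((monGens ^ 8).filter (HasOrder 4)).card = 24 ∧
    ((monGens ^ 8).filter (HasOrder 8)).card = 24 := by
  decide +kernel

theorem exists_hasOrder_of_mem_monGens_pow_eight :
    ∀ a ∈ monGens ^ 8, ∃ k ∈ ({1, 2, 3, 4, 8} : Finset ℕ), HasOrder k a := by
  decide +kernel

theorem G_card_orderOf_eq {k : ℕ} (hk : 0 < k) :
    Nat.card {g : G // orderOf g = k} = ((monGens ^ 8).filter (HasOrder k)).card :=
  (equivClosureMonGens.card_orderOf_eq k).trans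
    (Submonoid.card_orderOf_eq_card_filter coe_closure_monGens hk)

/-- `G` contains exactly 1 element of order 1, 15 of order 2, 32 of order 3, 24 of order 4, and
24 of order 8, and no elements of any other order. -/
theorem stmt_15 :
    Nat.card {g : G // orderOf g = 1} = 1 ∧
    Nat.card {g : G // orderOf g = 2} = 15 ∧
    Nat.card {g : G // orderOf g = 3} = 32 ∧
    Nat.card {g : G // orderOf g = 4} = 24 ∧
    Nat.card {g : G // orderOf g = 8} = 24 ∧
    ∀ g : G, orderOf g ∈ ({1, 2, 3, 4, 8} : Set ℕ) := by
  obtain ⟨h1, h2, h3, h4, h8⟩ := card_filter_hasOrder_monGens_pow_eight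
  refine ⟨(G_card_orderOf_eq one_pos).trans h1, (G_card_orderOf_eq two_pos).trans h2,
    (G_card_orderOf_eq three_pos).trans h3, (G_card_orderOf_eq four_pos).trans h4,
    (G_card_orderOf_eq (by norm_num)).trans h8, fun g => ?_⟩
  rw [← equivClosureMonGens.orderOf_eq g]
  simpa using Submonoid.orderOf_mem_of_forall_hasOrder coe_closure_monGens
    exists_hasOrder_of_mem_monGens_pow_eight (equivClosureMonGens g)
end

section
/- Let φ : FreeGroup (Fin 3) → Perm({0,1,2,3}) be the group homomorphism sending, for i = 1,2,3, the generator sᵢ to the transposition (0 i). Then φ is surjective and its kernel is the normal closure of the set of relators {sᵢ² : i}, together with {(sᵢsⱼ)³ : i ≠ j} and {(sᵢsⱼsᵢs_k)² : i, j, k pairwise distinct}; equivalently, the symmetric group S₄ is isomorphic to the presented group with generators s₁, s₂, s₃ and relations sᵢ² = 1, (sᵢsⱼ)³ = 1 for i ≠ j, and (sᵢsⱼsᵢs_k)² = 1 for i, j, k pairwise distinct. -/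
/-!
Write `a, b, c` for the images of `s₁, s₂, s₃` in the presented group. They are involutions
satisfying the braid relation pairwise, and `c` commutes with `aba`. Hence `⟨a, b⟩` has at most
the six elements `1, a, b, ab, ba, aba`, and right multiplication by the generators permutes the
four sets `⟨a, b⟩ · {1, c, ca, cb}` (coset enumeration), so the presented group has at most
`24 = |S₄|` elements. The transpositions `(0 i)` satisfy the relations and generate `S₄`, so the
induced map onto `S₄` is bijective, and its injectivity says that the kernel of the map from the
free group is the normal closure of the relators.
-/

/-- The Coxeter-type relators `sᵢ²`, `(sᵢsⱼ)³` for `i ≠ j`, and `(sᵢsⱼsᵢs_k)²` for `i, j, k`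
pairwise distinct, in the free group on three generators. -/
def rels₃ : Set (FreeGroup (Fin 3)) :=
  {w | ∃ i : Fin 3, w = (FreeGroup.of i) ^ 2} ∪
  {w | ∃ i j : Fin 3, i ≠ j ∧ w = (FreeGroup.of i * FreeGroup.of j) ^ 3} ∪
  {w | ∃ i j k : Fin 3, i ≠ j ∧ j ≠ k ∧ i ≠ k ∧
    w = (FreeGroup.of i * FreeGroup.of j * FreeGroup.of i * FreeGroup.of k) ^ 2}

open Subgroup Equiv Pointwise

section Involutions

variable {G : Type*} [Group G]

theorem mul_mul_eq_of_mul_pow_three_eq_one {x y : G} (hx : x * x = 1) (hy : y * y = 1)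
    (h : (x * y) ^ 3 = 1) : x * y * x = y * x * y := by
  have h' : (x * y * x) * (y * x * y) = 1 := by
    simpa only [pow_succ, pow_zero, one_mul, mul_assoc] using h
  rw [eq_inv_of_mul_eq_one_left h', mul_inv_rev, mul_inv_rev, inv_eq_of_mul_eq_one_left hx,
    inv_eq_of_mul_eq_one_left hy, mul_assoc]

theorem commute_of_mul_pow_two_eq_one {x y : G} (hx : x * x = 1) (hy : y * y = 1)
    (h : (x * y) ^ 2 = 1) : Commute x y := by
  rw [pow_two] at h
  rw [Commute, SemiconjBy, eq_inv_of_mul_eq_one_left h, mul_inv_rev, inv_eq_of_mul_eq_one_left hx,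
    inv_eq_of_mul_eq_one_left hy]

theorem Subgroup.closure_subset_of_mul_mem {s T : Set G} (hs : ∀ x ∈ s, x * x = 1)
    (h1 : 1 ∈ T) (hT : ∀ t ∈ T, ∀ x ∈ s, t * x ∈ T) : (closure s : Set G) ⊆ T := by
  intro g hg
  induction hg using closure_induction_right with
  | one => exact h1
  | mul_right t _ x hx ht => exact hT t ht x hx
  | mul_inv_cancel t _ x hx ht => rw [inv_eq_of_mul_eq_one_left (hs x hx)]; exact hT t ht x hx

theorem Subgroup.closure_subset_mul_of_mul_mem_s18 {s T : Set G} (hs : ∀ x ∈ s, x * x = 1)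
    (H : Subgroup G) (h1 : (1 : G) ∈ (H : Set G) * T)
    (hT : ∀ t ∈ T, ∀ x ∈ s, t * x ∈ (H : Set G) * T) : (closure s : Set G) ⊆ H * T := by
  refine closure_subset_of_mul_mem hs h1 ?_
  intro g hg x hx
  obtain ⟨h, hh, t, ht, rfl⟩ := Set.mem_mul.mp hg
  obtain ⟨h', hh', t', ht', he⟩ := Set.mem_mul.mp (hT t ht x hx)
  exact Set.mem_mul.mpr ⟨h * h', H.mul_mem hh hh', t', ht', by rw [mul_assoc, he, mul_assoc]⟩

theorem Subgroup.closure_pair_subset_of_braid {x y : G} (hx : x * x = 1) (hy : y * y = 1)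
    (hxy : x * y * x = y * x * y) :
    (closure {x, y} : Set G) ⊆ {1, x, y, x * y, y * x, x * y * x} := by
  have hx' (g : G) : g * x * x = g := by rw [mul_assoc, hx, mul_one]
  have hy' (g : G) : g * y * y = g := by rw [mul_assoc, hy, mul_one]
  have hxyxy : x * y * x * y = y * x := by rw [hxy, hy']
  refine closure_subset_of_mul_mem (by simp [hx, hy]) (by simp) ?_
  rintro t (rfl | rfl | rfl | rfl | rfl | rfl) z (rfl | rfl)
  all_goals simp [hx, hy, hx', hy', hxy.symm, hxyxy]

theorem Subgroup.closure_triple_subset_of_braid {a b c : G} (ha : a * a = 1) (hb : b * b = 1)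
    (hc : c * c = 1) (hab : a * b * a = b * a * b) (hac : a * c * a = c * a * c)
    (hbc : b * c * b = c * b * c) (hcomm : Commute (a * b * a) c) :
    (closure {a, b, c} : Set G) ⊆ {1, a, b, a * b, b * a, a * b * a} * {1, c, c * a, c * b} := by
  set H := closure {a, b}
  set T : Set G := {1, c, c * a, c * b}
  have haH : a ∈ H := subset_closure (by simp)
  have hbH : b ∈ H := subset_closure (by simp)
  have habaH : a * b * a ∈ H := H.mul_mem (H.mul_mem haH hbH) haH
  have mem {g : G} (h t : G) (hh : h ∈ H) (ht : t ∈ T) (e : h * t = g) :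
      g ∈ (H : Set G) * T :=
    e ▸ Set.mul_mem_mul hh ht
  calc (closure {a, b, c} : Set G) ⊆ H * T := by
        refine closure_subset_mul_of_mul_mem_s18 (by simp [ha, hb, hc]) H
          (mem 1 1 H.one_mem (by simp [T]) (one_mul 1)) ?_
        intro t ht x hx
        rcases ht with ht | ht | ht | ht <;> rcases hx with hx | hx | hx <;> subst t x
        · exact mem a 1 haH (by simp [T]) (by simp)
        · exact mem b 1 hbH (by simp [T]) (by simp)
        · exact mem 1 c H.one_mem (by simp [T]) (by simp)
        · exact mem 1 (c * a) H.one_mem (by simp [T]) (one_mul _)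
        · exact mem 1 (c * b) H.one_mem (by simp [T]) (one_mul _)
        · exact mem 1 1 H.one_mem (by simp [T]) (by simp [hc])
        · exact mem 1 c H.one_mem (by simp [T]) (by simp [mul_assoc, ha])
        · exact mem (a * b * a) (c * a) habaH (by simp [T]) (by
            rw [← mul_assoc, hcomm.eq]; simp only [mul_assoc, ha, mul_one])
        · exact mem a (c * a) haH (by simp [T]) (by rw [← mul_assoc, hac])
        · exact mem (a * b * a) (c * b) habaH (by simp [T]) (by
            rw [← mul_assoc, hcomm.eq, hab]; simp only [mul_assoc, hb, mul_one])
        · exact mem 1 c H.one_mem (by simp [T]) (by simp [mul_assoc, hb])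
        · exact mem b (c * b) hbH (by simp [T]) (by rw [← mul_assoc, hbc])
    _ ⊆ _ := Set.mul_subset_mul_right (closure_pair_subset_of_braid ha hb hab)

end Involutions

theorem Set.finite_and_natCard_le_of_univ_subset_mul {G : Type*} [Group G] {A B : Set G}
    (hA : A.Finite) (hB : B.Finite) (h : Set.univ ⊆ A * B) :
    Finite G ∧ Nat.card G ≤ Nat.card A * Nat.card B := by
  have hAB := hA.mul hB
  refine ⟨Set.finite_univ_iff.mp (hAB.subset h), ?_⟩
  calc Nat.card G = Nat.card (Set.univ : Set G) := Nat.card_univ.symm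
    _ ≤ Nat.card ↥(A * B) := Nat.card_mono hAB h
    _ ≤ Nat.card A * Nat.card B := Set.natCard_mul_le

theorem Equiv.Perm.closure_range_swap_eq_top {α : Type*} [Finite α] [DecidableEq α] (a : α) :
    closure (Set.range (swap a)) = ⊤ := by
  have mem (x : α) : swap a x ∈ closure (Set.range (swap a)) := subset_closure ⟨x, rfl⟩
  rw [eq_top_iff, ← Perm.closure_isSwap, closure_le]
  rintro _ ⟨y, z, hyz, rfl⟩
  by_cases hy : y = a
  · subst hy; exact mem z
  by_cases hz : z = a
  · subst hz; rw [swap_comm]; exact mem y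
  -- conjugating `(a z)` by `(a y)` gives `(y z)`
  rw [← swap_mul_swap_mul_swap hz (Ne.symm hyz), swap_comm z a]
  exact mul_mem (mul_mem (mem y) (mem z)) (mem y)

theorem closure_range_star_swaps :
    closure (Set.range ![swap (0 : Fin 4) 1, swap 0 2, swap 0 3]) = ⊤ := by
  rw [eq_top_iff, ← Perm.closure_range_swap_eq_top 0, closure_le]
  rintro _ ⟨x, rfl⟩
  fin_cases x
  · show swap 0 0 ∈ _
    rw [swap_self]
    exact one_mem _
  · exact subset_closure ⟨0, rfl⟩
  · exact subset_closure ⟨1, rfl⟩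
  · exact subset_closure ⟨2, rfl⟩

theorem lift_star_swaps_eq_one_of_mem_rels₃ :
    ∀ r ∈ rels₃, FreeGroup.lift ![swap (0 : Fin 4) 1, swap 0 2, swap 0 3] r = 1 := by
  rintro r ((⟨i, rfl⟩ | ⟨i, j, hij, rfl⟩) | ⟨i, j, k, hij, hjk, hik, rfl⟩) <;>
    simp only [map_pow, map_mul, FreeGroup.lift_apply_of]
  · fin_cases i <;> decide
  · fin_cases i <;> fin_cases j <;> first | exact absurd rfl hij | decide
  · fin_cases i <;> fin_cases j <;> fin_cases k <;>
      first | exact absurd rfl hij | exact absurd rfl hjk | exact absurd rfl hik | decide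

namespace PresentedGroup

variable {α G : Type*} [Group G] {f : α → G} {rels : Set (FreeGroup α)}

theorem toGroup_comp_mk (h : ∀ r ∈ rels, FreeGroup.lift f r = 1) :
    (toGroup h).comp (mk rels) = FreeGroup.lift f :=
  FreeGroup.ext_hom _ _ fun _ => rfl

theorem toGroup_surjective_of_lift_surjective (h : ∀ r ∈ rels, FreeGroup.lift f r = 1)
    (hsurj : Function.Surjective (FreeGroup.lift f)) : Function.Surjective (toGroup h) := by
  rw [← toGroup_comp_mk h, MonoidHom.coe_comp] at hsurj
  exact hsurj.of_comp

theorem ker_lift_eq_normalClosure (h : ∀ r ∈ rels, FreeGroup.lift f r = 1)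
    (hinj : Function.Injective (toGroup h)) :
    (FreeGroup.lift f).ker = normalClosure rels := by
  rw [← toGroup_comp_mk h, ← MonoidHom.comap_ker, (MonoidHom.ker_eq_bot_iff _).mpr hinj,
    MonoidHom.comap_bot]
  ext x
  exact mk_eq_one_iff

theorem rels₃_of_mul_self (i : Fin 3) : (of i : PresentedGroup rels₃) * of i = 1 := by
  have h := one_of_mem (rels := rels₃) (Or.inl (Or.inl ⟨i, rfl⟩))
  rwa [map_pow, pow_two] at h

theorem rels₃_braid {i j : Fin 3} (hij : i ≠ j) :
    (of i : PresentedGroup rels₃) * of j * of i = of j * of i * of j := by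
  have h := one_of_mem (rels := rels₃) (Or.inl (Or.inr ⟨i, j, hij, rfl⟩))
  rw [map_pow, map_mul] at h
  exact mul_mul_eq_of_mul_pow_three_eq_one (rels₃_of_mul_self i) (rels₃_of_mul_self j) h

theorem rels₃_commute {i j k : Fin 3} (hij : i ≠ j) (hjk : j ≠ k) (hik : i ≠ k) :
    Commute ((of i : PresentedGroup rels₃) * of j * of i) (of k) := by
  have h := one_of_mem (rels := rels₃) (Or.inr ⟨i, j, k, hij, hjk, hik, rfl⟩)
  rw [map_pow, map_mul, map_mul, map_mul] at h
  refine commute_of_mul_pow_two_eq_one ?_ (rels₃_of_mul_self k) h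
  have cancel (l : Fin 3) (g : PresentedGroup rels₃) : of l * (of l * g) = g := by
    rw [← mul_assoc, rels₃_of_mul_self, one_mul]
  simp only [mul_assoc, cancel, rels₃_of_mul_self]

theorem rels₃_univ_subset : (Set.univ : Set (PresentedGroup rels₃)) ⊆
    {1, of 0, of 1, of 0 * of 1, of 1 * of 0, of 0 * of 1 * of 0} *
      {1, of 2, of 2 * of 0, of 2 * of 1} := by
  have hgen : Set.range (of : Fin 3 → PresentedGroup rels₃) = {of 0, of 1, of 2} := by
    ext; simp [Fin.exists_fin_succ, eq_comm]
  rw [← coe_top, ← closure_range_of, hgen]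
  exact closure_triple_subset_of_braid (rels₃_of_mul_self 0) (rels₃_of_mul_self 1)
    (rels₃_of_mul_self 2) (rels₃_braid (by decide)) (rels₃_braid (by decide))
    (rels₃_braid (by decide)) (rels₃_commute (by decide) (by decide) (by decide))

theorem rels₃_finite_and_card_le :
    Finite (PresentedGroup rels₃) ∧ Nat.card (PresentedGroup rels₃) ≤ 24 := by
  classical
  obtain ⟨hfin, hcard⟩ := Set.finite_and_natCard_le_of_univ_subset_mul (Set.toFinite _)
    (Set.toFinite _) rels₃_univ_subset
  refine ⟨hfin, hcard.trans (Nat.mul_le_mul ?_ ?_ : _ ≤ 6 * 4)⟩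
  · simpa [← Set.ncard_eq_toFinset_card', Set.toFinset_insert] using Finset.card_le_six
  · simpa [← Set.ncard_eq_toFinset_card', Set.toFinset_insert] using Finset.card_le_four

end PresentedGroup

/-- The homomorphism `FreeGroup (Fin 3) → S₄` sending `sᵢ ↦ (0 i+1)` is surjective with kernel
the normal closure of the relators `sᵢ²`, `(sᵢsⱼ)³` (`i ≠ j`), `(sᵢsⱼsᵢs_k)²` (`i,j,k` pairwise
distinct); equivalently, `S₄` is isomorphic to the corresponding presented group. -/
theorem stmt_18 :
    Function.Surjective
      (FreeGroup.lift ![Equiv.swap 0 1, Equiv.swap 0 2, Equiv.swap 0 3] :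
        FreeGroup (Fin 3) →* Equiv.Perm (Fin 4)) ∧
    (FreeGroup.lift ![Equiv.swap 0 1, Equiv.swap 0 2, Equiv.swap 0 3] :
        FreeGroup (Fin 3) →* Equiv.Perm (Fin 4)).ker
      = Subgroup.normalClosure rels₃ ∧
    Nonempty (PresentedGroup rels₃ ≃* Equiv.Perm (Fin 4)) := by
  have hsurj := FreeGroup.lift_surjective_iff_closure_range_eq_top.mpr closure_range_star_swaps
  obtain ⟨_, hcard⟩ := PresentedGroup.rels₃_finite_and_card_le
  have hbij : Function.Bijective (PresentedGroup.toGroup lift_star_swaps_eq_one_of_mem_rels₃) :=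
    (PresentedGroup.toGroup_surjective_of_lift_surjective _ hsurj).bijective_of_nat_card_le
      (hcard.trans (by simp [Fintype.card_perm, Nat.factorial]))
  exact ⟨hsurj, PresentedGroup.ker_lift_eq_normalClosure _ hbij.injective,
    ⟨MulEquiv.ofBijective _ hbij⟩⟩
end
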